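/- arXiv:1011.1689 — 4 statements merged into one kernel-verified Lean document; each statement's English description precedes it below -/
import Mathlib

section
/- Let S be a stochastic flow on a Polish space (X,d) over (Ω,𝓕,ℙ), and let A(t,ω) ⊆ X, t ∈ ℝ, ω ∈ Ω, be a compact forward invariant family: there is a full-measure set Ω₀ ∈ 𝓕 such that (a) for each x ∈ X and t ∈ ℝ the map ω ↦ d(x, A(t,ω)) is Borel measurable; (b) for each ω ∈ Ω₀ and t ∈ ℝ the set A(t,ω) is nonempty and compact; (c) for each ω ∈ Ω₀ and s ≤ t, S(t,s;ω)A(s,ω) ⊆ A(t,ω). Then there exists an evolution system of measures {μ_t}_{t∈ℝ} for S which is supported by A, i.e. for each t ∈ ℝ, the disintegration satisfies μ_{tω}(A(t,ω)) = 1 for ℙ-a.e. ω. -/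
/-!
Off a measurable full-measure set `Ω₁` on which everything behaves as assumed, replace `S` by
the identity and `A` by a point. For each `ω`, the sequences `(x N)` with `x N ∈ A (-N) ω` that
are trajectories up to time `-M` form compact sets decreasing in `M`. Castaing representations
of the `A (-N) ω` give them countable measurable dense families, so their distance functions are
measurable, and so is that of their nonempty intersection, the set of complete trajectories. A
Kuratowski–Ryll-Nardzewski selection from this intersection, flowed forward to all real times,
is a measurable invariant section `a t ω ∈ A t ω`; `μ t` is the law of `(ω, a t ω)`,
disintegrated into the Dirac masses at `a t ω`.
-/

open MeasureTheory Filter Topology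

/-- A stochastic flow on a metric space `X` over a probability space `(Ω, 𝓕, ℙ)`:
a family of maps `S t s ω : X → X` (for `s ≤ t`) satisfying, for `ℙ`-a.e. `ω`,
the cocycle property, continuity in `x`, the identity at equal times, and a joint
measurability condition in `(s, ω)` on `(-∞, t] × Ω`. -/
def IsStochasticFlow {Ω X : Type*} [MeasurableSpace Ω] [MetricSpace X]
    [MeasurableSpace X] [BorelSpace X]
    (ℙ : Measure Ω) (S : ℝ → ℝ → Ω → X → X) : Prop :=
  (∀ᵐ ω ∂ℙ,
    (∀ s r t : ℝ, s ≤ r → r ≤ t → ∀ x : X, S t r ω (S r s ω x) = S t s ω x) ∧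
    (∀ s t : ℝ, s ≤ t → Continuous fun x : X => S t s ω x) ∧
    (∀ t : ℝ, ∀ x : X, S t t ω x = x)) ∧
  (∀ t : ℝ, ∀ x : X, Measurable fun p : {s : ℝ // s ≤ t} × Ω => S t p.1.1 p.2 x)

/-- `K` is an attracting set at time `t` for the sample point `ω`: every nonempty
bounded set `B` satisfies `d(S(t,s;ω)B, K) → 0` as `s → -∞`, where
`d(A,B) = sup_{x ∈ A} inf_{y ∈ B} d(x,y)` (formulated with `EMetric.infEdist`). -/
def Attracts {Ω X : Type*} [MetricSpace X]
    (S : ℝ → ℝ → Ω → X → X) (t : ℝ) (ω : Ω) (K : Set X) : Prop :=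
  ∀ B : Set X, B.Nonempty → Bornology.IsBounded B →
    Tendsto (fun s : ℝ => ⨆ x ∈ B, EMetric.infEdist (S t s ω x) K) atBot (𝓝 0)

/-- The stochastic flow `S` is asymptotically compact with compact attracting sets `K t ω`
on a full-measure set `Ω₀`. -/
def IsAsymptoticallyCompact {Ω X : Type*} [MeasurableSpace Ω] [MetricSpace X]
    (ℙ : Measure Ω) (S : ℝ → ℝ → Ω → X → X) : Prop :=
  ∃ Ω₀ : Set Ω, MeasurableSet Ω₀ ∧ ℙ Ω₀ = 1 ∧
    ∀ ω ∈ Ω₀, ∀ t : ℝ, ∃ K : Set X, IsCompact K ∧ Attracts S t ω K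

/-- An evolution system of measures for the stochastic flow `S`: a family of probability
measures `μ t` on `Ω × X` with marginal `ℙ` on `Ω`, such that the image of `μ s` under
`(ω, x) ↦ (ω, S t s ω x)` is `μ t` whenever `s ≤ t`. -/
def IsEvolutionSystem {Ω X : Type*} [MeasurableSpace Ω] [MeasurableSpace X]
    (ℙ : Measure Ω) (S : ℝ → ℝ → Ω → X → X) (μ : ℝ → Measure (Ω × X)) : Prop :=
  (∀ t : ℝ, IsProbabilityMeasure (μ t)) ∧
  (∀ t : ℝ, (μ t).map Prod.fst = ℙ) ∧
  (∀ s t : ℝ, s ≤ t → (μ s).map (fun p : Ω × X => (p.1, S t s p.1 p.2)) = μ t)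


open Metric ENNReal TopologicalSpace Set

theorem exists_edist_denseSeq_lt {E : Type*} [PseudoEMetricSpace E] [SeparableSpace E]
    [Nonempty E] (x : E) {ε : ℝ≥0∞} (hε : ε ≠ 0) :
    ∃ k, edist x (denseSeq E k) < ε := by
  obtain ⟨_, ⟨k, rfl⟩, hk⟩ :=
    EMetric.mem_closure_iff.1 (denseRange_denseSeq E x) ε (pos_iff_ne_zero.2 hε)
  exact ⟨k, hk⟩

section Selection

variable {α E : Type*} [MeasurableSpace α] [PseudoEMetricSpace E] [SeparableSpace E]
  [MeasurableSpace E] [BorelSpace E] [Nonempty E] {F : α → Set E}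

theorem exists_measurable_refined_approx (hF : ∀ x : E, Measurable fun ω => infEDist x (F ω))
    {w : α → E} (hw : Measurable w) {ρ : α → ℝ≥0∞} (hρ : Measurable ρ)
    (hwF : ∀ ω, infEDist (w ω) (F ω) < ρ ω) :
    ∃ w' : α → E, Measurable w' ∧ (∀ ω, infEDist (w' ω) (F ω) < ρ ω / 2) ∧
      ∀ ω, edist (w' ω) (w ω) < 2 * ρ ω := by
  classical
  let e := denseSeq E
  let good : α → ℕ → Prop := fun ω k =>
    infEDist (e k) (F ω) < ρ ω / 2 ∧ edist (e k) (w ω) < 2 * ρ ω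
  have hgood : ∀ ω, ∃ k, good ω k := by
    intro ω
    obtain ⟨y, hyF, hwy⟩ := infEDist_lt_iff.1 (hwF ω)
    have hρ0 : ρ ω / 2 ≠ 0 := (ENNReal.half_pos (zero_le.trans_lt (hwF ω)).ne').ne'
    obtain ⟨k, hyk⟩ := exists_edist_denseSeq_lt y hρ0
    rw [edist_comm] at hyk hwy
    refine ⟨k, (infEDist_le_edist_of_mem hyF).trans_lt hyk, ?_⟩
    calc edist (e k) (w ω) ≤ edist (e k) y + edist y (w ω) := edist_triangle _ _ _
      _ < ρ ω / 2 + ρ ω := ENNReal.add_lt_add hyk hwy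
      _ ≤ 2 * ρ ω := by rw [two_mul]; gcongr; exact ENNReal.half_le_self
  have hgood_meas : ∀ k, MeasurableSet {ω | good ω k} := fun k =>
    (measurableSet_lt (hF (e k)) (hρ.div_const 2)).inter
      (measurableSet_lt (measurable_const.edist hw) (measurable_const.mul hρ))
  exact ⟨fun ω => e (Nat.find (hgood ω)),
    measurable_from_nat.comp (measurable_find hgood hgood_meas),
    fun ω => (Nat.find_spec (hgood ω)).1, fun ω => (Nat.find_spec (hgood ω)).2⟩

theorem exists_measurable_approxSeq (hF : ∀ x : E, Measurable fun ω => infEDist x (F ω))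
    {v : α → E} (hv : Measurable v) {r : α → ℝ≥0∞} (hr : Measurable r)
    (hvF : ∀ ω, infEDist (v ω) (F ω) < r ω) :
    ∃ u : ℕ → α → E, u 0 = v ∧ (∀ n, Measurable (u n)) ∧
      (∀ n ω, infEDist (u n ω) (F ω) < r ω / 2 ^ n) ∧
      ∀ n ω, edist (u n ω) (u (n + 1) ω) ≤ 2 * r ω / 2 ^ n := by
  choose! next hnext_meas hnext_near hnext_dist using
    fun (n : ℕ) (w : α → E) (hw : Measurable w)
      (hwF : ∀ ω, infEDist (w ω) (F ω) < r ω / 2 ^ n) =>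
      exists_measurable_refined_approx hF hw (hr.div_const _) hwF
  let u : ℕ → α → E := fun n => Nat.rec v (fun n w => next n w) n
  have hu : ∀ n, Measurable (u n) ∧ ∀ ω, infEDist (u n ω) (F ω) < r ω / 2 ^ n := by
    intro n
    induction n with
    | zero => simpa using ⟨hv, hvF⟩
    | succ n ih =>
      refine ⟨hnext_meas n _ ih.1 ih.2, fun ω => ?_⟩
      rw [show r ω / 2 ^ (n + 1) = r ω / 2 ^ n / 2 by
        rw [pow_succ, ENNReal.div_eq_inv_mul, ENNReal.div_eq_inv_mul, ENNReal.div_eq_inv_mul,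
          ENNReal.mul_inv (by simp) (by simp)]
        ring]
      exact hnext_near n _ ih.1 ih.2 ω
  refine ⟨u, rfl, fun n => (hu n).1, fun n => (hu n).2, fun n ω => ?_⟩
  rw [edist_comm, mul_div_assoc]
  exact (hnext_dist n _ (hu n).1 (hu n).2 ω).le

theorem exists_measurable_selection_near [CompleteSpace E] (hFc : ∀ ω, IsClosed (F ω))
    (hF : ∀ x : E, Measurable fun ω => infEDist x (F ω)) {v : α → E} (hv : Measurable v)
    {r : α → ℝ≥0∞} (hr : Measurable r) (hr_top : ∀ ω, r ω ≠ ∞)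
    (hvF : ∀ ω, infEDist (v ω) (F ω) < r ω) :
    ∃ g : α → E, Measurable g ∧
      ∀ ω, g ω ∈ F ω ∧ edist (v ω) (g ω) ≤ 4 * r ω := by
  obtain ⟨u, rfl, hu_meas, hu_near, hu_dist⟩ := exists_measurable_approxSeq hF hv hr hvF
  choose g hg using fun ω => cauchySeq_tendsto_of_complete <|
    cauchySeq_of_edist_le_geometric_two _ (mul_ne_top ofNat_ne_top (hr_top ω)) (hu_dist · ω)
  refine ⟨g, measurable_of_tendsto_metrizable hu_meas (tendsto_pi_nhds.2 hg),
    fun ω => ⟨?_, ?_⟩⟩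
  · have hlim : Tendsto (fun n : ℕ => r ω / 2 ^ n) atTop (𝓝 0) := by
      simpa using ENNReal.Tendsto.const_div
        (ENNReal.tendsto_pow_atTop_nhds_top_iff.2 one_lt_two) (Or.inr (hr_top ω))
    rw [mem_iff_infEDist_zero_of_closed (hFc ω)]
    exact le_antisymm (le_of_tendsto_of_tendsto' ((continuous_infEDist.tendsto _).comp (hg ω))
      hlim fun n => (hu_near n ω).le) zero_le
  · calc edist (u 0 ω) (g ω) ≤ 2 * (2 * r ω) :=
          edist_le_of_edist_le_geometric_two_of_tendsto₀ _ (hu_dist · ω) (hg ω)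
      _ = 4 * r ω := by ring

end Selection

theorem exists_measurable_castaing {α E : Type*} [MeasurableSpace α] [PseudoMetricSpace E]
    [SeparableSpace E] [MeasurableSpace E] [BorelSpace E] [Nonempty E] [CompleteSpace E]
    {F : α → Set E} (hFc : ∀ ω, IsClosed (F ω))
    (hFne : ∀ ω, (F ω).Nonempty) (hF : ∀ x : E, Measurable fun ω => infEDist x (F ω)) :
    ∃ c : ℕ × ℕ → α → E, (∀ i, Measurable (c i)) ∧
      ∀ ω, (∀ i, c i ω ∈ F ω) ∧ closure (range fun i => c i ω) = F ω := by
  let ε : ℕ → ℝ≥0∞ := fun n => 2⁻¹ ^ n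
  have hε0 : ∀ n, ε n ≠ 0 := fun n => pow_ne_zero _ (by simp)
  choose c hc_meas hc using fun i : ℕ × ℕ =>
    exists_measurable_selection_near hFc hF (v := fun _ => denseSeq E i.1) measurable_const
      (r := fun ω => infEDist (denseSeq E i.1) (F ω) + ε i.2) ((hF _).add measurable_const)
      (fun ω => add_ne_top.2 ⟨infEDist_ne_top (hFne ω), pow_ne_top (by simp)⟩)
      (fun ω => lt_add_right (infEDist_ne_top (hFne ω)) (hε0 i.2))
  refine ⟨c, hc_meas, fun ω => ⟨fun i => (hc i ω).1, Subset.antisymm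
    (closure_minimal (range_subset_iff.2 fun i => (hc i ω).1) (hFc ω)) fun x hx => ?_⟩⟩
  choose j hj using fun n => exists_edist_denseSeq_lt x (hε0 n)
  have hclose : ∀ n, edist (c (j n, n) ω) x ≤ 9 * ε n := fun n =>
    calc edist (c (j n, n) ω) x
        ≤ edist (denseSeq E (j n)) (c (j n, n) ω) + edist x (denseSeq E (j n)) := by
          rw [edist_comm x]; exact edist_triangle_left _ _ _
      _ ≤ 4 * (ε n + ε n) + ε n := by
          gcongr
          · refine (hc (j n, n) ω).2.trans ?_
            gcongr
            exact (infEDist_le_edist_of_mem hx).trans (edist_comm x _ ▸ (hj n).le)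
          · exact (hj n).le
      _ = 9 * ε n := by ring
  have hlim : Tendsto (fun n => 9 * ε n) atTop (𝓝 0) := by
    simpa using ENNReal.Tendsto.const_mul
      (ENNReal.tendsto_pow_atTop_nhds_zero_of_lt_one (ENNReal.inv_lt_one.2 one_lt_two))
      (Or.inr ofNat_ne_top)
  exact mem_closure_of_tendsto (tendsto_iff_edist_tendsto_0.2 <|
    tendsto_of_tendsto_of_tendsto_of_le_of_le tendsto_const_nhds hlim (fun _ => zero_le) hclose)
    (Eventually.of_forall fun n => mem_range_self _)

theorem measurable_infEDist_closure_range {α E ι : Type*} [MeasurableSpace α]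
    [PseudoEMetricSpace E] [MeasurableSpace E] [OpensMeasurableSpace E] [Countable ι]
    {d : ι → α → E} (hd : ∀ i, Measurable (d i)) (x : E) :
    Measurable fun ω => infEDist x (closure (range fun i => d i ω)) := by
  simp_rw [infEDist_closure, infEDist, iInf_range]
  exact Measurable.iInf fun i => (continuous_const.edist continuous_id).measurable.comp (hd i)

theorem Antitone.infEDist_iInter {E : Type*} [EMetricSpace E] {K : ℕ → Set E} (hK : Antitone K)
    (hKc : ∀ n, IsCompact (K n)) (hKne : ∀ n, (K n).Nonempty) (x : E) :
    infEDist x (⋂ n, K n) = ⨆ n, infEDist x (K n) := by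
  refine le_antisymm ?_ (iSup_le fun n => infEDist_anti (iInter_subset _ n))
  set s := ⨆ n, infEDist x (K n)
  have hne : ∀ n, (K n ∩ closedEBall x s).Nonempty := fun n => by
    obtain ⟨y, hy, hxy⟩ := (hKc n).exists_infEDist_eq_edist (hKne n) x
    refine ⟨y, hy, ?_⟩
    rw [mem_closedEBall, edist_comm, ← hxy]
    exact le_iSup (fun n => infEDist x (K n)) n
  obtain ⟨y, hy⟩ := IsCompact.nonempty_iInter_of_sequence_nonempty_isCompact_isClosed
    (fun n => K n ∩ closedEBall x s) (fun n => inter_subset_inter_left _ (hK n.le_succ))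
    hne ((hKc 0).inter_right isClosed_closedEBall)
    (fun n => (hKc n).isClosed.inter isClosed_closedEBall)
  have hy' := mem_iInter.1 hy
  calc infEDist x (⋂ n, K n) ≤ edist x y :=
        infEDist_le_edist_of_mem (mem_iInter.2 fun n => (hy' n).1)
    _ ≤ s := by rw [edist_comm]; exact (hy' 0).2

theorem pi_closure_range_subset_closure_range_getD {ι X : Type*} [TopologicalSpace X]
    [Inhabited ι] (c : ℕ → ι → X) :
    (pi univ fun N => closure (range (c N))) ⊆
      closure (range fun (L : List ι) (N : ℕ) => c N (L.getD N default)) := by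
  rw [← closure_pi_set]
  refine closure_minimal (fun w hw => ?_) isClosed_closure
  choose σ hσ using fun N => hw N (mem_univ N)
  refine mem_closure_of_tendsto (b := atTop)
    (f := fun n N => c N (((List.range n).map σ).getD N default))
    (tendsto_pi_nhds.2 fun N => tendsto_const_nhds.congr' ?_)
    (Eventually.of_forall fun n => mem_range_self _)
  filter_upwards [eventually_gt_atTop N] with n hn
  simp [List.getD_eq_getElem?_getD, hn, hσ]

section Trajectory

-- `U N M` carries a state from the time `-M` to the later time `-N`, so indices grow into the past.
variable {Ω X : Type*} (U : ℕ → ℕ → Ω → X → X) (B : ℕ → Ω → Set X)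

def backwardExtension (M : ℕ) (ω : Ω) (w : ℕ → X) : ℕ → X :=
  fun N => if N ≤ M then U N M ω (w M) else w N

def partialTrajectories (M : ℕ) (ω : Ω) : Set (ℕ → X) :=
  {z | z ∈ pi univ (B · ω) ∧ ∀ N ≤ M, z N = U N M ω (z M)}

variable {U B}

theorem partialTrajectories_eq_image (hUid : ∀ N ω x, U N N ω x = x)
    (hBinv : ∀ N M ω, N ≤ M → U N M ω '' B M ω ⊆ B N ω) (M : ℕ) (ω : Ω) :
    partialTrajectories U B M ω = backwardExtension U M ω '' pi univ (B · ω) := by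
  ext z
  constructor
  · rintro ⟨hzB, hz⟩
    refine ⟨z, hzB, funext fun N => ?_⟩
    unfold backwardExtension
    split_ifs with h
    · exact (hz N h).symm
    · rfl
  · rintro ⟨w, hw, rfl⟩
    refine ⟨fun N _ => ?_, fun N hN => by simp [backwardExtension, hN, hUid]⟩
    unfold backwardExtension
    split_ifs with h
    · exact hBinv N M ω h (mem_image_of_mem _ (hw M (mem_univ M)))
    · exact hw N (mem_univ N)

theorem continuous_backwardExtension [TopologicalSpace X]
    (hUcont : ∀ N M ω, Continuous (U N M ω)) (M : ℕ) (ω : Ω) :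
    Continuous (backwardExtension U M ω) :=
  continuous_pi fun N => by
    unfold backwardExtension
    split_ifs
    · exact (hUcont N M ω).comp (continuous_apply M)
    · exact continuous_apply N

theorem antitone_partialTrajectories
    (hUco : ∀ N M R ω, N ≤ M → M ≤ R → ∀ x, U N M ω (U M R ω x) = U N R ω x)
    (ω : Ω) : Antitone fun M => partialTrajectories U B M ω := by
  refine antitone_nat_of_succ_le fun M z ⟨hzB, hz⟩ => ⟨hzB, fun N hN => ?_⟩
  rw [hz M M.le_succ, hUco N M (M + 1) ω hN M.le_succ]
  exact hz N (hN.trans M.le_succ)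

-- Any metric inducing the product topology on `ℕ → X` would do; we take the `PiCountable` one.
open scoped PiCountable

variable [MeasurableSpace Ω] [MetricSpace X] [SeparableSpace X] [CompleteSpace X]
  [MeasurableSpace X] [BorelSpace X] [Nonempty X]

theorem measurable_infEDist_partialTrajectories (hUid : ∀ N ω x, U N N ω x = x)
    (hUcont : ∀ N M ω, Continuous (U N M ω))
    (hUmeas : ∀ N M, Measurable fun p : Ω × X => U N M p.1 p.2)
    (hBc : ∀ N ω, IsCompact (B N ω)) (hBne : ∀ N ω, (B N ω).Nonempty)
    (hBinv : ∀ N M ω, N ≤ M → U N M ω '' B M ω ⊆ B N ω)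
    (hBm : ∀ N x, Measurable fun ω => infEDist x (B N ω)) (M : ℕ) (u : ℕ → X) :
    Measurable fun ω => infEDist u (partialTrajectories U B M ω) := by
  choose c hc_meas hc using fun N =>
    exists_measurable_castaing (fun ω => (hBc N ω).isClosed) (hBne N) (hBm N)
  let d : List (ℕ × ℕ) → Ω → ℕ → X := fun L ω =>
    backwardExtension U M ω fun N => c N (L.getD N default) ω
  have hd_meas : ∀ L, Measurable (d L) := fun L => measurable_pi_lambda _ fun N => by
    simp only [d, backwardExtension]
    split_ifs
    · exact (hUmeas N M).comp (measurable_id.prodMk (hc_meas M _))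
    · exact hc_meas N _
  have hK : ∀ ω, partialTrajectories U B M ω = closure (range fun L => d L ω) := by
    intro ω
    have hcont := continuous_backwardExtension hUcont M ω
    rw [partialTrajectories_eq_image hUid hBinv]
    refine Subset.antisymm ?_ (closure_minimal ?_ ?_)
    · calc backwardExtension U M ω '' pi univ (B · ω)
          ⊆ backwardExtension U M ω '' closure
              (range fun (L : List (ℕ × ℕ)) N => c N (L.getD N default) ω) := by
            gcongr
            simpa only [(hc _ ω).2] using
              pi_closure_range_subset_closure_range_getD fun N i => c N i ω
        _ ⊆ closure (range fun L => d L ω) :=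
            (image_closure_subset_closure_image hcont).trans_eq (by rw [← range_comp]; rfl)
    · rintro _ ⟨L, rfl⟩
      exact mem_image_of_mem _ fun N _ => (hc N ω).1 _
    · exact ((isCompact_univ_pi fun N => hBc N ω).image hcont).isClosed
  simp_rw [hK]
  exact measurable_infEDist_closure_range hd_meas u

theorem exists_measurable_trajectory (hUid : ∀ N ω x, U N N ω x = x)
    (hUco : ∀ N M R ω, N ≤ M → M ≤ R → ∀ x, U N M ω (U M R ω x) = U N R ω x)
    (hUcont : ∀ N M ω, Continuous (U N M ω))
    (hUmeas : ∀ N M, Measurable fun p : Ω × X => U N M p.1 p.2)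
    (hBc : ∀ N ω, IsCompact (B N ω)) (hBne : ∀ N ω, (B N ω).Nonempty)
    (hBinv : ∀ N M ω, N ≤ M → U N M ω '' B M ω ⊆ B N ω)
    (hBm : ∀ N x, Measurable fun ω => infEDist x (B N ω)) :
    ∃ z : ℕ → Ω → X, (∀ N, Measurable (z N)) ∧
      ∀ ω, (∀ N, z N ω ∈ B N ω) ∧ ∀ N M, N ≤ M → z N ω = U N M ω (z M ω) := by
  have hKc : ∀ M ω, IsCompact (partialTrajectories U B M ω) := fun M ω => by
    rw [partialTrajectories_eq_image hUid hBinv]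
    exact (isCompact_univ_pi fun N => hBc N ω).image (continuous_backwardExtension hUcont M ω)
  have hKne : ∀ M ω, (partialTrajectories U B M ω).Nonempty := fun M ω => by
    rw [partialTrajectories_eq_image hUid hBinv]
    exact (univ_pi_nonempty_iff.2 fun N => hBne N ω).image _
  obtain ⟨c, hc_meas, hc⟩ := exists_measurable_castaing
    (fun ω => isClosed_iInter fun M => (hKc M ω).isClosed)
    (fun ω => IsCompact.nonempty_iInter_of_sequence_nonempty_isCompact_isClosed _
      (fun M => antitone_partialTrajectories hUco ω M.le_succ) (hKne · ω) (hKc 0 ω)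
      (fun M => (hKc M ω).isClosed))
    (fun u => by
      simp_rw [(antitone_partialTrajectories hUco _).infEDist_iInter (hKc · _) (hKne · _)]
      exact Measurable.iSup fun M => measurable_infEDist_partialTrajectories hUid hUcont hUmeas
        hBc hBne hBinv hBm M u)
  refine ⟨fun N ω => c (0, 0) ω N, fun N => (measurable_pi_apply N).comp (hc_meas _),
    fun ω => ?_⟩
  have hz := mem_iInter.1 ((hc ω).1 (0, 0))
  exact ⟨fun N => (hz N).1 N (mem_univ N), fun N M h => (hz M).2 N h⟩

end Trajectory

section Flow

variable {Ω X : Type*}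

def IsFlowAt [TopologicalSpace X] (S : ℝ → ℝ → Ω → X → X) (ω : Ω) : Prop :=
  (∀ s r t : ℝ, s ≤ r → r ≤ t → ∀ x : X, S t r ω (S r s ω x) = S t s ω x) ∧
  (∀ s t : ℝ, s ≤ t → Continuous fun x : X => S t s ω x) ∧
  (∀ t : ℝ, ∀ x : X, S t t ω x = x)

open Classical in
noncomputable def flowOn (Ω₁ : Set Ω) (S : ℝ → ℝ → Ω → X → X) :
    ℝ → ℝ → Ω → X → X :=
  fun t s ω => if ω ∈ Ω₁ ∧ s ≤ t then S t s ω else id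

variable {Ω₁ : Set Ω} {S : ℝ → ℝ → Ω → X → X} {s t : ℝ} {ω : Ω}

theorem flowOn_of_mem (hω : ω ∈ Ω₁) (hst : s ≤ t) : flowOn Ω₁ S t s ω = S t s ω :=
  if_pos ⟨hω, hst⟩

theorem flowOn_of_not (h : ¬(ω ∈ Ω₁ ∧ s ≤ t)) : flowOn Ω₁ S t s ω = id :=
  if_neg h

variable [TopologicalSpace X]

theorem continuous_flowOn (hflow : ∀ ω ∈ Ω₁, IsFlowAt S ω) (t s : ℝ) (ω : Ω) :
    Continuous (flowOn Ω₁ S t s ω) := by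
  by_cases h : ω ∈ Ω₁ ∧ s ≤ t
  · rw [flowOn_of_mem h.1 h.2]
    exact (hflow ω h.1).2.1 s t h.2
  · rw [flowOn_of_not h]
    exact continuous_id

theorem isFlowAt_flowOn (hflow : ∀ ω ∈ Ω₁, IsFlowAt S ω) (ω : Ω) :
    IsFlowAt (flowOn Ω₁ S) ω := by
  by_cases hω : ω ∈ Ω₁
  · refine ⟨fun s r t hsr hrt x => ?_, fun s t _ => continuous_flowOn hflow t s ω,
      fun t x => ?_⟩
    · rw [flowOn_of_mem hω hsr, flowOn_of_mem hω hrt, flowOn_of_mem hω (hsr.trans hrt)]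
      exact (hflow ω hω).1 s r t hsr hrt x
    · rw [flowOn_of_mem hω le_rfl]
      exact (hflow ω hω).2.2 t x
  · have hid : ∀ t s, flowOn Ω₁ S t s ω = id := fun t s => flowOn_of_not fun h => hω h.1
    exact ⟨fun _ _ _ _ _ _ => by simp [hid], fun _ _ _ => by rw [hid]; exact continuous_id,
      fun _ _ => by simp [hid]⟩

theorem measurable_flowOn [MeasurableSpace Ω] [MetrizableSpace X] [SecondCountableTopology X]
    [MeasurableSpace X] [BorelSpace X]
    (hSm : ∀ t x, Measurable fun p : {s : ℝ // s ≤ t} × Ω => S t p.1.1 p.2 x)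
    (hΩ₁ : MeasurableSet Ω₁) (hflow : ∀ ω ∈ Ω₁, IsFlowAt S ω) (t s : ℝ) :
    Measurable fun p : Ω × X => flowOn Ω₁ S t s p.1 p.2 := by
  classical
  have hmeas : ∀ x, Measurable fun ω => flowOn Ω₁ S t s ω x := fun x => by
    by_cases hst : s ≤ t
    · have : (fun ω => flowOn Ω₁ S t s ω x) =
          fun ω => if ω ∈ Ω₁ then S t s ω x else x := by
        ext ω
        by_cases hω : ω ∈ Ω₁
        · simp [flowOn_of_mem hω hst, hω]
        · simp [flowOn_of_not (fun h : ω ∈ Ω₁ ∧ s ≤ t => hω h.1), hω]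
      rw [this]
      exact Measurable.ite hΩ₁ ((hSm t x).comp (measurable_const.prodMk measurable_id :
        Measurable fun ω => ((⟨s, hst⟩ : {s : ℝ // s ≤ t}), ω))) measurable_const
    · simp only [flowOn_of_not (fun h : _ ∧ s ≤ t => hst h.2), id, measurable_const]
  exact (measurable_uncurry_of_continuous_of_measurable
    (fun ω => continuous_flowOn hflow t s ω) hmeas).comp measurable_swap

end Flow

section Extension

variable {Ω X : Type*} {V : ℝ → ℝ → Ω → X → X} {z : ℕ → Ω → X}

-- `-⌈-t⌉₊` is the largest nonpositive integer `≤ t`.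
noncomputable def extendTrajectory (V : ℝ → ℝ → Ω → X → X) (z : ℕ → Ω → X)
    (t : ℝ) (ω : Ω) : X :=
  V t (-⌈-t⌉₊) ω (z ⌈-t⌉₊ ω)

theorem neg_natCeil_neg_le (t : ℝ) : -(⌈-t⌉₊ : ℝ) ≤ t := by
  linarith [Nat.le_ceil (-t)]

theorem extendTrajectory_eq
    (hco : ∀ ω s r t, s ≤ r → r ≤ t → ∀ x, V t r ω (V r s ω x) = V t s ω x)
    (hz : ∀ ω N M, N ≤ M → z N ω = V (-N) (-M) ω (z M ω)) {t : ℝ} {R : ℕ}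
    (hR : ⌈-t⌉₊ ≤ R) (ω : Ω) :
    extendTrajectory V z t ω = V t (-R) ω (z R ω) := by
  rw [extendTrajectory, hz ω _ R hR,
    hco ω _ _ t (neg_le_neg (Nat.cast_le.2 hR)) (neg_natCeil_neg_le t)]

theorem extendTrajectory_comp
    (hco : ∀ ω s r t, s ≤ r → r ≤ t → ∀ x, V t r ω (V r s ω x) = V t s ω x)
    (hz : ∀ ω N M, N ≤ M → z N ω = V (-N) (-M) ω (z M ω)) {s t : ℝ} (hst : s ≤ t)
    (ω : Ω) :
    V t s ω (extendTrajectory V z s ω) = extendTrajectory V z t ω := by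
  rw [extendTrajectory_eq hco hz (le_max_left _ _), extendTrajectory_eq hco hz (le_max_right _ _),
    hco ω _ s t ((neg_le_neg (Nat.cast_le.2 (le_max_left _ _))).trans (neg_natCeil_neg_le s)) hst]

end Extension

theorem exists_measurable_invariant_section {Ω X : Type*} [MeasurableSpace Ω] [MetricSpace X]
    [SeparableSpace X] [CompleteSpace X] [MeasurableSpace X] [BorelSpace X] [Nonempty X]
    {S : ℝ → ℝ → Ω → X → X}
    (hSm : ∀ t x, Measurable fun p : {s : ℝ // s ≤ t} × Ω => S t p.1.1 p.2 x)
    {Ω₁ : Set Ω} (hΩ₁ : MeasurableSet Ω₁) (hflow : ∀ ω ∈ Ω₁, IsFlowAt S ω)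
    {A : ℝ → Ω → Set X}
    (hAm : ∀ x t, Measurable fun ω => infDist x (A t ω))
    (hA : ∀ ω ∈ Ω₁, ∀ t, (A t ω).Nonempty ∧ IsCompact (A t ω))
    (hAinv : ∀ ω ∈ Ω₁, ∀ s t, s ≤ t → S t s ω '' A s ω ⊆ A t ω) :
    ∃ a : ℝ → Ω → X, (∀ t, Measurable (a t)) ∧
      ∀ ω ∈ Ω₁, (∀ t, a t ω ∈ A t ω) ∧
        ∀ s t, s ≤ t → S t s ω (a s ω) = a t ω := by
  classical
  obtain ⟨x₀⟩ := ‹Nonempty X›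
  let V := flowOn Ω₁ S
  have hV : ∀ ω, IsFlowAt V ω := isFlowAt_flowOn hflow
  have hneg_le : ∀ {N M : ℕ}, N ≤ M → -(M : ℝ) ≤ -N := fun h =>
    neg_le_neg (Nat.cast_le.2 h)
  let B : ℕ → Ω → Set X := fun N ω => if ω ∈ Ω₁ then A (-N) ω else {x₀}
  have hB : ∀ N ω, IsCompact (B N ω) ∧ (B N ω).Nonempty := fun N ω => by
    by_cases hω : ω ∈ Ω₁
    · simpa [B, hω] using (hA ω hω _).symm
    · simp [B, hω]
  have hBinv : ∀ (N M : ℕ) ω, N ≤ M → V (-N) (-M) ω '' B M ω ⊆ B N ω := by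
    intro N M ω h
    by_cases hω : ω ∈ Ω₁
    · simpa [B, hω, V, flowOn_of_mem hω (hneg_le h)] using hAinv ω hω _ _ (hneg_le h)
    · simp [B, hω, V, flowOn_of_not (fun h' : ω ∈ Ω₁ ∧ _ => hω h'.1)]
  have hBm : ∀ N x, Measurable fun ω => infEDist x (B N ω) := fun N x => by
    have : (fun ω => infEDist x (B N ω)) = fun ω =>
        if ω ∈ Ω₁ then ENNReal.ofReal (infDist x (A (-N) ω)) else edist x x₀ := by
      ext ω
      by_cases hω : ω ∈ Ω₁
      · simp [B, hω, infDist, ofReal_toReal (infEDist_ne_top (hA ω hω _).1)]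
      · simp [B, hω]
    rw [this]
    exact Measurable.ite hΩ₁ (hAm x _).ennreal_ofReal measurable_const
  obtain ⟨z, hz_meas, hz⟩ := exists_measurable_trajectory (U := fun N M => V (-N) (-M)) (B := B)
    (fun N ω => (hV ω).2.2 _)
    (fun N M R ω hNM hMR => (hV ω).1 _ _ _ (hneg_le hMR) (hneg_le hNM))
    (fun N M => continuous_flowOn hflow _ _) (fun N M => measurable_flowOn hSm hΩ₁ hflow _ _)
    (fun N ω => (hB N ω).1) (fun N ω => (hB N ω).2) hBinv hBm
  refine ⟨extendTrajectory V z, fun t => (measurable_flowOn hSm hΩ₁ hflow _ _).comp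
    (measurable_id.prodMk (hz_meas _)), fun ω hω => ⟨fun t => ?_, fun s t hst => ?_⟩⟩
  · have hzA : z ⌈-t⌉₊ ω ∈ A (-⌈-t⌉₊) ω := by
      simpa [B, hω] using (hz ω).1 ⌈-t⌉₊
    simp only [extendTrajectory, V, flowOn_of_mem hω (neg_natCeil_neg_le t)]
    exact hAinv ω hω _ _ (neg_natCeil_neg_le t) (mem_image_of_mem _ hzA)
  · rw [← flowOn_of_mem (S := S) hω hst]
    exact extendTrajectory_comp (fun ω => (hV ω).1) (fun ω => (hz ω).2) hst ω

theorem isEvolutionSystem_compProd_deterministic {Ω X : Type*} [MeasurableSpace Ω]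
    [TopologicalSpace X] [MetrizableSpace X] [SecondCountableTopology X] [MeasurableSpace X]
    [BorelSpace X]
    {ℙ : Measure Ω} [IsProbabilityMeasure ℙ] {S : ℝ → ℝ → Ω → X → X}
    (hSm : ∀ t x, Measurable fun p : {s : ℝ // s ≤ t} × Ω => S t p.1.1 p.2 x)
    {Ω₁ : Set Ω} (hΩ₁ : MeasurableSet Ω₁) (hΩ₁ae : ∀ᵐ ω ∂ℙ, ω ∈ Ω₁)
    (hflow : ∀ ω ∈ Ω₁, IsFlowAt S ω) {a : ℝ → Ω → X} (ha : ∀ t, Measurable (a t))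
    (hinv : ∀ ω ∈ Ω₁, ∀ s t, s ≤ t → S t s ω (a s ω) = a t ω) :
    IsEvolutionSystem ℙ S
      fun t => ℙ.compProd (ProbabilityTheory.Kernel.deterministic (a t) (ha t)) := by
  refine ⟨fun t => inferInstance, fun t => Measure.fst_compProd _ _, fun s t hst => ?_⟩
  beta_reduce
  rw [Measure.compProd_deterministic, Measure.compProd_deterministic]
  have hgraph : Measurable fun ω => (ω, a s ω) := measurable_id.prodMk (ha s)
  have hΩ₁_map : ∀ᵐ p ∂ℙ.map (fun ω => (ω, a s ω)), p.1 ∈ Ω₁ :=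
    (ae_map_iff hgraph.aemeasurable (measurable_fst hΩ₁)).2 hΩ₁ae
  calc (ℙ.map fun ω => (ω, a s ω)).map (fun p => (p.1, S t s p.1 p.2))
      = (ℙ.map fun ω => (ω, a s ω)).map (fun p => (p.1, flowOn Ω₁ S t s p.1 p.2)) :=
        Measure.map_congr (hΩ₁_map.mono fun p hp => by simp only [flowOn_of_mem hp hst])
    _ = ℙ.map fun ω => (ω, flowOn Ω₁ S t s ω (a s ω)) :=
        Measure.map_map (measurable_fst.prodMk (measurable_flowOn hSm hΩ₁ hflow t s)) hgraph
    _ = ℙ.map fun ω => (ω, a t ω) :=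
        Measure.map_congr (hΩ₁ae.mono fun ω hω => by
          simp only [flowOn_of_mem hω hst, hinv ω hω s t hst])

/-- if `A t ω` is a compact forward invariant family for the stochastic flow
`S` (measurable in `ω`, nonempty compact and forward invariant on a full-measure set `Ω₀`),
then there exists an evolution system of measures `μ t` for `S`, with disintegration
`κ t : Ω → Measure X`, supported by `A`: `κ t ω (A t ω) = 1` for `ℙ`-a.e. `ω`. -/
theorem stmt1 {Ω X : Type*} [MeasurableSpace Ω] [MetricSpace X] [CompleteSpace X]
    [TopologicalSpace.SeparableSpace X] [MeasurableSpace X] [BorelSpace X]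
    (ℙ : Measure Ω) [IsProbabilityMeasure ℙ]
    (S : ℝ → ℝ → Ω → X → X) (hS : IsStochasticFlow ℙ S)
    (A : ℝ → Ω → Set X)
    (Ω₀ : Set Ω) (hΩ₀m : MeasurableSet Ω₀) (hΩ₀ : ℙ Ω₀ = 1)
    (ha : ∀ (x : X) (t : ℝ), Measurable fun ω => Metric.infDist x (A t ω))
    (hb : ∀ ω ∈ Ω₀, ∀ t : ℝ, (A t ω).Nonempty ∧ IsCompact (A t ω))
    (hc : ∀ ω ∈ Ω₀, ∀ s t : ℝ, s ≤ t → S t s ω '' A s ω ⊆ A t ω) :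
    ∃ (μ : ℝ → Measure (Ω × X)) (κ : ℝ → Ω → Measure X),
      IsEvolutionSystem ℙ S μ ∧
      (∀ (t : ℝ) (ω : Ω), IsProbabilityMeasure (κ t ω)) ∧
      (∀ (t : ℝ) (B : Set X), MeasurableSet B → Measurable fun ω => κ t ω B) ∧
      (∀ (t : ℝ) (F : Set Ω) (B : Set X), MeasurableSet F → MeasurableSet B →
        μ t (F ×ˢ B) = ∫⁻ ω in F, κ t ω B ∂ℙ) ∧
      (∀ t : ℝ, ∀ᵐ ω ∂ℙ, κ t ω (A t ω) = 1) := by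
  have hΩ₀ae : ∀ᵐ ω ∂ℙ, ω ∈ Ω₀ :=
    (ae_mem_iff_measure_eq hΩ₀m.nullMeasurableSet).2 (by rw [hΩ₀, measure_univ])
  obtain ⟨Ω₁, hΩ₁ae, hΩ₁m, hΩ₁⟩ := (hS.1.and hΩ₀ae).exists_measurable_mem
  replace hΩ₁ae : ∀ᵐ ω ∂ℙ, ω ∈ Ω₁ := eventually_mem_set.2 hΩ₁ae
  have hflow : ∀ ω ∈ Ω₁, IsFlowAt S ω := fun ω hω => (hΩ₁ ω hω).1
  obtain ⟨ω₁, hω₁⟩ := hΩ₁ae.exists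
  have : Nonempty X := ⟨(hb ω₁ (hΩ₁ ω₁ hω₁).2 0).1.some⟩
  obtain ⟨a, ha_meas, ha_sec⟩ := exists_measurable_invariant_section hS.2 hΩ₁m hflow ha
    (fun ω hω => hb ω (hΩ₁ ω hω).2) (fun ω hω => hc ω (hΩ₁ ω hω).2)
  refine ⟨fun t => ℙ.compProd (ProbabilityTheory.Kernel.deterministic (a t) (ha_meas t)),
    fun t => ProbabilityTheory.Kernel.deterministic (a t) (ha_meas t),
    isEvolutionSystem_compProd_deterministic hS.2 hΩ₁m hΩ₁ae hflow ha_meas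
      (fun ω hω => (ha_sec ω hω).2),
    fun _ _ => inferInstance, fun t B hB => ProbabilityTheory.Kernel.measurable_coe _ hB,
    fun t F B hF hB => Measure.compProd_apply_prod hF hB, fun t => hΩ₁ae.mono fun ω hω => ?_⟩
  beta_reduce
  rw [ProbabilityTheory.Kernel.deterministic_apply]
  exact Measure.dirac_apply_of_mem ((ha_sec ω hω).1 t)
end

section
/- Let S be a stochastic flow on a Polish space (X,d) over (Ω,𝓕,ℙ), and let A(t,ω) ⊆ X be a compact forward invariant family: there is a full-measure set Ω₀ ∈ 𝓕, on which the flow identities (i), (ii), (iv) hold, such that (a) for each x ∈ X and t ∈ ℝ the map ω ↦ d(x, A(t,ω)) is Borel measurable; (b) for each ω ∈ Ω₀ and t ∈ ℝ the set A(t,ω) is nonempty and compact; (c) for each ω ∈ Ω₀ and s ≤ t, S(t,s;ω)A(s,ω) ⊆ A(t,ω). Then there exist measurable maps x_t : Ω₀ → X, t ∈ ℝ, such that x_t(ω) ∈ A(t,ω) and S(t,s;ω)x_s(ω) = x_t(ω) for all ω ∈ Ω₀ and all −∞ < s ≤ t < ∞. -/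
open MeasureTheory Filter Topology

/-! For each sample `ω` the pullback limits `P(t) = ⋂_{s ≤ t} S(t,s) A(s)` are nonempty and
compact, and `S(t,s)` maps `P(s)` onto `P(t)` (a decreasing intersection of compact fibres is
nonempty). Starting in `P(0)` and choosing at each integer time `-(m+1)` a preimage in `P(-(m+1))`
of the point chosen at `-m` gives a backward orbit, which the flow pushes forward to all real times.

The choices are made measurably by the Kuratowski–Ryll-Nardzewski selection theorem, which asks
for measurability of `ω ↦ d(x, F ω)`. For the sets that occur this is obtained from Castaing
representations, writing each distance as a countable infimum or supremum of measurable functions: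
images of compact sets are approximated by images of a dense sequence, decreasing intersections of
compact sets by suprema, and fibres `{w | f w = z}` by the open sets `{w | d(f w, z) < 1/(n+1)}`. -/

open Set Metric

theorem exists_seq_of_exists_succ {β : Type*} {P : ℕ → β → Prop} {R : ℕ → β → β → Prop}
    {b : β} (hb : P 0 b) (hsucc : ∀ n b, P n b → ∃ c, P (n + 1) c ∧ R n b c) :
    ∃ f : ℕ → β, f 0 = b ∧ (∀ n, P n (f n)) ∧ ∀ n, R n (f n) (f (n + 1)) := by
  choose! next hnextP hnextR using hsucc
  let f : ℕ → β := fun n => Nat.rec b next n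
  have hf : ∀ n, P n (f n) := fun n => Nat.rec hb (fun n ih => hnextP n _ ih) n
  exact ⟨f, rfl, hf, fun n => hnextR n _ (hf n)⟩

namespace Metric

theorem infEDist_iInter_of_antitone {X : Type*} [EMetricSpace X] {K : ℕ → Set X}
    (hK : Antitone K) (hc : ∀ n, IsCompact (K n)) (hne : ∀ n, (K n).Nonempty) (x : X) :
    infEDist x (⋂ n, K n) = ⨆ n, infEDist x (K n) := by
  refine le_antisymm ?_ (iSup_le fun n => infEDist_anti (iInter_subset K n))
  -- nearest points of the `K n` accumulate at a point of the intersection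
  choose y hyK hy using fun n => (hc n).exists_infEDist_eq_edist (hne n) x
  obtain ⟨p, -, φ, hφ, hφp⟩ := (hc 0).tendsto_subseq fun n => hK (Nat.zero_le n) (hyK n)
  have hp : p ∈ ⋂ n, K n := mem_iInter.2 fun n =>
    (hc n).isClosed.mem_of_tendsto hφp <| (eventually_ge_atTop n).mono fun k hk =>
      hK (hk.trans hφ.le_apply) (hyK (φ k))
  have hlim : Tendsto (fun k => edist x (y (φ k))) atTop (𝓝 (edist x p)) :=
    ((continuous_const.edist continuous_id).tendsto p).comp hφp
  calc infEDist x (⋂ n, K n) ≤ edist x p := infEDist_le_edist_of_mem hp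
    _ ≤ ⨆ n, infEDist x (K n) :=
      le_of_tendsto hlim <| Eventually.of_forall fun k =>
        (hy (φ k)).symm.trans_le (le_iSup (fun n => infEDist x (K n)) (φ k))

theorem infEDist_eq_of_subset_of_subset_closure {X : Type*} [PseudoEMetricSpace X]
    {s t : Set X} (hst : s ⊆ t) (hts : t ⊆ closure s) (x : X) :
    infEDist x t = infEDist x s :=
  le_antisymm (infEDist_anti hst)
    (by simpa only [infEDist_closure] using infEDist_anti (x := x) hts)

theorem infEDist_range_inter {X ι : Type*} [PseudoEMetricSpace X] (c : ι → X) (U : Set X)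
    (x : X) [DecidablePred (· ∈ U)] :
    infEDist x (range c ∩ U) = ⨅ i, if c i ∈ U then edist x (c i) else ⊤ := by
  simp only [infEDist, mem_inter_iff, mem_range, iInf_and, iInf_exists, ← iInf_eq_if]
  rw [iInf_comm]
  exact iInf_congr fun i => iInf_iInf_eq_right

theorem iInter_closure_inter_preimage_ball {X Y : Type*} [TopologicalSpace X] [MetricSpace Y]
    {K : Set X} (hK : IsClosed K) {f : X → Y} (hf : Continuous f) (y : Y) :
    ⋂ n : ℕ, closure (K ∩ f ⁻¹' ball y (1 / (n + 1))) = K ∩ f ⁻¹' {y} := by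
  refine Subset.antisymm (fun w hw => ?_) (subset_iInter fun n => ?_)
  · have hclosed : ∀ n : ℕ, closure (K ∩ f ⁻¹' ball y (1 / (n + 1)))
        ⊆ K ∩ f ⁻¹' closedBall y (1 / (n + 1)) := fun n =>
      closure_minimal (inter_subset_inter_right _ (preimage_mono ball_subset_closedBall))
        (hK.inter (isClosed_closedBall.preimage hf))
    have hw' : ∀ n : ℕ, w ∈ K ∧ dist (f w) y ≤ 1 / (n + 1) := fun n =>
      hclosed n (mem_iInter.1 hw n)
    refine ⟨(hw' 0).1, dist_le_zero.1 ?_⟩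
    exact ge_of_tendsto' tendsto_one_div_add_atTop_nhds_zero_nat fun n => (hw' n).2
  · exact (inter_subset_inter_right _ (preimage_mono (singleton_subset_iff.2
      (mem_ball_self (by positivity))))).trans subset_closure

end Metric

section MeasurableSelection

variable {α X : Type*} [MeasurableSpace α] [MetricSpace X] [TopologicalSpace.SeparableSpace X]
  [MeasurableSpace X] [BorelSpace X]

theorem exists_measurable_near_of_infDist_lt [Nonempty X] {F : α → Set X}
    (hne : ∀ a, (F a).Nonempty) (hF : ∀ x, Measurable fun a => infDist x (F a))
    {g : α → X} (hg : Measurable g) {r : α → ℝ} (hr : Measurable r)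
    (hgr : ∀ a, infDist (g a) (F a) < r a) {ε : ℝ} (hε : 0 < ε) :
    ∃ g' : α → X, Measurable g' ∧
      ∀ a, infDist (g' a) (F a) < ε ∧ dist (g a) (g' a) < r a + ε := by
  classical
  obtain ⟨u, hu⟩ := TopologicalSpace.exists_dense_seq X
  have hex : ∀ a, ∃ k, infDist (u k) (F a) < ε ∧ dist (g a) (u k) < r a + ε := by
    intro a
    obtain ⟨y, hyF, hgy⟩ := (infDist_lt_iff (hne a)).1 (hgr a)
    obtain ⟨k, hk⟩ := hu.exists_dist_lt y hε
    refine ⟨k, (infDist_le_dist_of_mem hyF).trans_lt (dist_comm (u k) y ▸ hk), ?_⟩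
    calc dist (g a) (u k) ≤ dist (g a) y + dist y (u k) := dist_triangle _ _ _
      _ < r a + ε := add_lt_add hgy hk
  have hQ : ∀ k, MeasurableSet {a | infDist (u k) (F a) < ε ∧ dist (g a) (u k) < r a + ε} :=
    fun k => (measurableSet_lt (hF (u k)) measurable_const).inter
      (measurableSet_lt ((continuous_id.dist continuous_const).measurable.comp hg) (hr.add_const ε))
  exact ⟨fun a => u (Nat.find (hex a)), (measurable_of_countable u).comp (measurable_find hex hQ),
    fun a => Nat.find_spec (hex a)⟩

/-- The Kuratowski–Ryll-Nardzewski selection theorem. -/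
theorem exists_measurable_selection_dist_le [CompleteSpace X] {F : α → Set X}
    (hcl : ∀ a, IsClosed (F a)) (hne : ∀ a, (F a).Nonempty)
    (hF : ∀ x, Measurable fun a => infEDist x (F a)) (v : X) {ε : ℝ} (hε : 0 < ε) :
    ∃ f : α → X, Measurable f ∧ (∀ a, f a ∈ F a) ∧
      ∀ a, dist v (f a) ≤ infDist v (F a) + ε := by
  have : Nonempty X := ⟨v⟩
  have hF' : ∀ x, Measurable fun a => infDist x (F a) := fun x => (hF x).ennreal_toReal
  set δ := ε / 6 with hδ
  have hδ0 : 0 < δ := by positivity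
  obtain ⟨g₀, hg₀, hg₀F⟩ := exists_measurable_near_of_infDist_lt hne hF' measurable_const
    ((hF' v).add_const δ) (fun a => lt_add_of_pos_right _ hδ0) hδ0
  obtain ⟨g, rfl, hg, hgg⟩ := exists_seq_of_exists_succ
    (P := fun n g => Measurable g ∧ ∀ a, infDist (g a) (F a) < δ * (1 / 2) ^ n)
    (R := fun n g g' => ∀ a, dist (g a) (g' a) ≤ 2 * δ * (1 / 2) ^ n)
    ⟨hg₀, fun a => by simpa using (hg₀F a).1⟩ fun n g hgn => by
      obtain ⟨g', hg', hg'F⟩ := exists_measurable_near_of_infDist_lt hne hF' hgn.1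
        measurable_const hgn.2 (by positivity : 0 < δ * (1 / 2) ^ (n + 1))
      refine ⟨g', ⟨hg', fun a => (hg'F a).1⟩, fun a => ?_⟩
      have hdist := (hg'F a).2
      have : 0 ≤ δ * (1 / 2) ^ n := by positivity
      rw [pow_succ] at hdist
      linarith
  have hcauchy : ∀ a, CauchySeq fun n => g n a := fun a =>
    cauchySeq_of_le_geometric (1 / 2) (2 * δ) (by norm_num) fun n => hgg n a
  choose f hf using fun a => cauchySeq_tendsto_of_complete (hcauchy a)
  refine ⟨f, measurable_of_tendsto_metrizable (fun n => (hg n).1) (tendsto_pi_nhds.2 hf),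
    fun a => ?_, fun a => ?_⟩
  · have hlim : Tendsto (fun n => infDist (g n a) (F a)) atTop (𝓝 (infDist (f a) (F a))) :=
      ((continuous_infDist_pt (F a)).tendsto _).comp (hf a)
    have hzero : Tendsto (fun n : ℕ => δ * (1 / 2) ^ n) atTop (𝓝 0) := by
      simpa using (tendsto_pow_atTop_nhds_zero_of_lt_one (by norm_num) (by norm_num :
        (1 / 2 : ℝ) < 1)).const_mul δ
    refine ((hcl a).mem_iff_infDist_zero (hne a)).2 (le_antisymm ?_ infDist_nonneg)
    exact le_of_tendsto_of_tendsto' hlim hzero fun n => ((hg n).2 a).le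
  · have hg₀f : dist (g 0 a) (f a) ≤ 2 * δ / (1 - 1 / 2) :=
      dist_le_of_le_geometric_of_tendsto₀ (1 / 2) (2 * δ) (by norm_num) (fun n => hgg n a) (hf a)
    calc dist v (f a) ≤ dist v (g 0 a) + dist (g 0 a) (f a) := dist_triangle _ _ _
      _ ≤ infDist v (F a) + δ + δ + 2 * δ / (1 - 1 / 2) := add_le_add (hg₀F a).2.le hg₀f
      _ = infDist v (F a) + ε := by rw [hδ]; ring

theorem exists_measurable_selection [CompleteSpace X] [Nonempty X] {F : α → Set X}
    (hcl : ∀ a, IsClosed (F a)) (hne : ∀ a, (F a).Nonempty)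
    (hF : ∀ x, Measurable fun a => infEDist x (F a)) :
    ∃ f : α → X, Measurable f ∧ ∀ a, f a ∈ F a :=
  let ⟨f, hf, hfF, _⟩ := exists_measurable_selection_dist_le hcl hne hF (Classical.arbitrary X)
    one_pos
  ⟨f, hf, hfF⟩

structure IsCastaingRepresentation {ι : Type*} (c : ι → α → X) (K : α → Set X) : Prop where
  measurable : ∀ i, Measurable (c i)
  mem : ∀ i a, c i a ∈ K a
  subset_closure : ∀ a, K a ⊆ closure (range fun i => c i a)

theorem exists_isCastaingRepresentation [CompleteSpace X] [Nonempty X] {F : α → Set X}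
    (hcl : ∀ a, IsClosed (F a)) (hne : ∀ a, (F a).Nonempty)
    (hF : ∀ x, Measurable fun a => infEDist x (F a)) :
    ∃ c : ℕ × ℕ → α → X, IsCastaingRepresentation c F := by
  obtain ⟨u, hu⟩ := TopologicalSpace.exists_dense_seq X
  choose c hc hcF hcu using fun p : ℕ × ℕ =>
    exists_measurable_selection_dist_le hcl hne hF (u p.1) (Nat.one_div_pos_of_nat (n := p.2))
  refine ⟨c, hc, hcF, fun a x hx => Metric.mem_closure_iff.2 fun ε hε => ?_⟩
  obtain ⟨k, hk⟩ := hu.exists_dist_lt x (by positivity : 0 < ε / 3)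
  obtain ⟨j, hj⟩ := exists_nat_one_div_lt (by positivity : 0 < ε / 3)
  refine ⟨c (k, j) a, ⟨(k, j), rfl⟩, ?_⟩
  have hukc : dist (u k) (c (k, j) a) ≤ dist (u k) x + 1 / (j + 1) :=
    (hcu (k, j) a).trans (add_le_add_left (infDist_le_dist_of_mem hx) _)
  calc dist x (c (k, j) a) ≤ dist x (u k) + dist (u k) (c (k, j) a) := dist_triangle _ _ _
    _ < ε := by rw [dist_comm (u k) x] at hukc; linarith

end MeasurableSelection

section MeasurableMultifunction

variable {α X Y ι : Type*} [MeasurableSpace α] [MetricSpace X] [MetricSpace Y]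

theorem measurable_infEDist_iInter {K : ℕ → α → Set X} (hK : ∀ a, Antitone fun n => K n a)
    (hc : ∀ n a, IsCompact (K n a)) (hne : ∀ n a, (K n a).Nonempty)
    (hKm : ∀ n x, Measurable fun a => infEDist x (K n a)) (x : X) :
    Measurable fun a => infEDist x (⋂ n, K n a) := by
  simp_rw [infEDist_iInter_of_antitone (hK _) (hc · _) (hne · _)]
  exact .iSup fun n => hKm n x

variable [MeasurableSpace X] [BorelSpace X] [TopologicalSpace.SeparableSpace X]
  [MeasurableSpace Y] [BorelSpace Y]

theorem Measurable.caratheodory {f : α → X → Y} (hf : ∀ a, Continuous (f a))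
    (hfm : ∀ x, Measurable fun a => f a x) {z : α → X} (hz : Measurable z) :
    Measurable fun a => f a (z a) :=
  (measurable_uncurry_of_continuous_of_measurable hf hfm).comp (hz.prodMk measurable_id)

theorem measurable_infEDist_image [Countable ι] {K : α → Set X} {c : ι → α → X}
    (hc : IsCastaingRepresentation c K) {f : α → X → Y} (hf : ∀ a, Continuous (f a))
    (hfm : ∀ x, Measurable fun a => f a x) (y : Y) :
    Measurable fun a => infEDist y (f a '' K a) := by
  have hrange : ∀ a, infEDist y (f a '' K a) = infEDist y (range fun i => f a (c i a)) := by
    refine fun a => infEDist_eq_of_subset_of_subset_closure ?_ ?_ y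
    · exact range_subset_iff.2 fun i => mem_image_of_mem _ (hc.mem i a)
    · calc f a '' K a ⊆ f a '' closure (range fun i => c i a) := image_mono (hc.subset_closure a)
        _ ⊆ closure (f a '' range fun i => c i a) := image_closure_subset_closure_image (hf a)
        _ = closure (range fun i => f a (c i a)) := by rw [← range_comp]; rfl
  simp_rw [hrange, infEDist, iInf_range]
  exact .iInf fun i => (continuous_const.edist continuous_id).measurable.comp
    ((hc.measurable i).caratheodory hf hfm)

variable [SecondCountableTopology Y]

theorem measurable_infEDist_inter_preimage_singleton [Countable ι] {K : α → Set X}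
    {c : ι → α → X} (hc : IsCastaingRepresentation c K) (hK : ∀ a, IsCompact (K a))
    {f : α → X → Y} (hf : ∀ a, Continuous (f a)) (hfm : ∀ x, Measurable fun a => f a x)
    {z : α → Y} (hz : Measurable z) (hne : ∀ a, (K a ∩ f a ⁻¹' {z a}).Nonempty) (x : X) :
    Measurable fun a => infEDist x (K a ∩ f a ⁻¹' {z a}) := by
  classical
  set U : ℕ → α → Set X := fun n a => f a ⁻¹' ball (z a) (1 / (n + 1))
  have hU : ∀ n a, IsOpen (U n a) := fun n a => isOpen_ball.preimage (hf a)
  have hinter : ∀ a, K a ∩ f a ⁻¹' {z a} = ⋂ n, closure (K a ∩ U n a) := fun a =>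
    (iInter_closure_inter_preimage_ball (hK a).isClosed (hf a) (z a)).symm
  -- on the relatively open sets `K a ∩ U n a` the Castaing representation stays dense
  have hopen : ∀ n a x, infEDist x (closure (K a ∩ U n a))
      = ⨅ i, if c i a ∈ U n a then edist x (c i a) else ⊤ := by
    intro n a x
    rw [infEDist_closure, ← infEDist_range_inter]
    refine infEDist_eq_of_subset_of_subset_closure
      (inter_subset_inter_left _ (range_subset_iff.2 fun i => hc.mem i a)) ?_ x
    calc K a ∩ U n a ⊆ U n a ∩ closure (range fun i => c i a) :=
          fun w hw => ⟨hw.2, hc.subset_closure a hw.1⟩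
      _ ⊆ closure (U n a ∩ range fun i => c i a) := (hU n a).inter_closure
      _ = closure ((range fun i => c i a) ∩ U n a) := by rw [inter_comm]
  simp_rw [hinter]
  refine measurable_infEDist_iInter (fun a => ?_) (fun n a => ?_) (fun n a => ?_) (fun n y => ?_) x
  · refine antitone_nat_of_succ_le fun n => closure_mono (inter_subset_inter_right _ ?_)
    refine preimage_mono (ball_subset_ball ?_)
    gcongr
    simp
  · exact (hK a).closure_of_subset inter_subset_left
  · exact (hne a).mono ((hinter a).trans_subset (iInter_subset _ n))
  · simp_rw [hopen]
    refine .iInf fun i => Measurable.ite ?_ ((continuous_const.edist continuous_id).measurable.comp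
      (hc.measurable i)) measurable_const
    exact measurableSet_lt (((hc.measurable i).caratheodory hf hfm).dist hz) measurable_const

end MeasurableMultifunction

theorem map_backward_orbit_of_le {X : Type*} {φ : ℝ → ℝ → X → X}
    (hφ : ∀ s r t, s ≤ r → r ≤ t → ∀ x, φ t r (φ r s x) = φ t s x) (hid : ∀ t x, φ t t x = x)
    {z : ℕ → X} (hz : ∀ m : ℕ, φ (-m) (-(m + 1 : ℕ)) (z (m + 1)) = z m) {m m' : ℕ}
    (hmm' : m ≤ m') : φ (-m) (-m') (z m') = z m := by
  induction m', hmm' using Nat.le_induction with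
  | base => exact hid _ _
  | succ n hmn ih =>
    rw [← hφ _ (-n) _ (by push_cast; linarith) (by simpa using hmn), hz, ih]

section Cocycle

variable {α X : Type*} [MeasurableSpace α] [MetricSpace X] [MeasurableSpace X]

structure IsCaratheodoryCocycle (T : ℝ → ℝ → α → X → X) : Prop where
  map_map : ∀ a s r t, s ≤ r → r ≤ t → ∀ x, T t r a (T r s a x) = T t s a x
  map_self : ∀ a t x, T t t a x = x
  continuous : ∀ a s t, s ≤ t → Continuous (T t s a)
  measurable : ∀ s t, s ≤ t → ∀ x, Measurable fun a => T t s a x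

structure IsCompactInvariantFamily (T : ℝ → ℝ → α → X → X) (A : ℝ → α → Set X) : Prop where
  nonempty : ∀ t a, (A t a).Nonempty
  isCompact : ∀ t a, IsCompact (A t a)
  mapsTo : ∀ a s t, s ≤ t → MapsTo (T t s a) (A s a) (A t a)
  measurable_infEDist : ∀ x t, Measurable fun a => infEDist x (A t a)

/-- The points of `A t a` reachable from `A s a` for every `s ≤ t`. By forward invariance the
images `T t s a '' A s a` decrease as `s` decreases, so integer steps back suffice. -/
def pullbackLimit (T : ℝ → ℝ → α → X → X) (A : ℝ → α → Set X) (t : ℝ) (a : α) : Set X :=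
  ⋂ n : ℕ, T t (t - n) a '' A (t - n) a

variable {T : ℝ → ℝ → α → X → X} {A : ℝ → α → Set X}

namespace IsCompactInvariantFamily

theorem image_subset_image (hT : IsCaratheodoryCocycle T) (hA : IsCompactInvariantFamily T A)
    (a : α) {s s' t : ℝ} (hss' : s ≤ s') (hs't : s' ≤ t) :
    T t s a '' A s a ⊆ T t s' a '' A s' a := by
  rintro _ ⟨x, hx, rfl⟩
  exact ⟨T s' s a x, hA.mapsTo a s s' hss' hx, hT.map_map a s s' t hss' hs't x⟩

theorem antitone_image_sub_nat (hT : IsCaratheodoryCocycle T) (hA : IsCompactInvariantFamily T A)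
    (t : ℝ) (a : α) : Antitone fun n : ℕ => T t (t - n) a '' A (t - n) a :=
  antitone_nat_of_succ_le fun n => hA.image_subset_image hT a (by push_cast; linarith)
    (by linarith [n.cast_nonneg (α := ℝ)])

theorem isCompact_image_sub_nat (hT : IsCaratheodoryCocycle T)
    (hA : IsCompactInvariantFamily T A) (t : ℝ) (a : α) (n : ℕ) :
    IsCompact (T t (t - n) a '' A (t - n) a) :=
  (hA.isCompact _ a).image (hT.continuous a _ t (by linarith [n.cast_nonneg (α := ℝ)]))

theorem isCompact_pullbackLimit (hT : IsCaratheodoryCocycle T)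
    (hA : IsCompactInvariantFamily T A) (t : ℝ) (a : α) : IsCompact (pullbackLimit T A t a) :=
  (hA.isCompact_image_sub_nat hT t a 0).of_isClosed_subset
    (isClosed_iInter fun n => (hA.isCompact_image_sub_nat hT t a n).isClosed) (iInter_subset _ 0)

theorem pullbackLimit_nonempty (hT : IsCaratheodoryCocycle T)
    (hA : IsCompactInvariantFamily T A) (t : ℝ) (a : α) : (pullbackLimit T A t a).Nonempty :=
  IsCompact.nonempty_iInter_of_sequence_nonempty_isCompact_isClosed _
    (fun n => hA.antitone_image_sub_nat hT t a n.le_succ) (fun _ => (hA.nonempty _ a).image _)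
    (hA.isCompact_image_sub_nat hT t a 0) fun n => (hA.isCompact_image_sub_nat hT t a n).isClosed

theorem pullbackLimit_subset_image (hT : IsCaratheodoryCocycle T)
    (hA : IsCompactInvariantFamily T A) (a : α) {s t : ℝ} (hst : s ≤ t) :
    pullbackLimit T A t a ⊆ T t s a '' A s a := by
  obtain ⟨n, hn⟩ := exists_nat_ge (t - s)
  exact (iInter_subset _ n).trans (hA.image_subset_image hT a (by linarith) hst)

theorem pullbackLimit_subset (hT : IsCaratheodoryCocycle T) (hA : IsCompactInvariantFamily T A)
    (t : ℝ) (a : α) : pullbackLimit T A t a ⊆ A t a :=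
  (hA.pullbackLimit_subset_image hT a le_rfl).trans (hA.mapsTo a t t le_rfl).image_subset

theorem exists_mem_pullbackLimit_map_eq (hT : IsCaratheodoryCocycle T)
    (hA : IsCompactInvariantFamily T A) (a : α) {s t : ℝ} (hst : s ≤ t) {y : X}
    (hy : y ∈ pullbackLimit T A t a) :
    ∃ w ∈ pullbackLimit T A s a, T t s a w = y := by
  set K : ℕ → Set X := fun n => T s (s - n) a '' A (s - n) a ∩ T t s a ⁻¹' {y}
  have hK : ∀ n, IsCompact (K n) := fun n => (hA.isCompact_image_sub_nat hT s a n).inter_right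
    (isClosed_singleton.preimage (hT.continuous a s t hst))
  have hKne : ∀ n, (K n).Nonempty := by
    intro n
    have hsn : s - n ≤ s := by linarith [n.cast_nonneg (α := ℝ)]
    obtain ⟨x, hx, rfl⟩ := hA.pullbackLimit_subset_image hT a (hsn.trans hst) hy
    exact ⟨T s (s - n) a x, mem_image_of_mem _ hx, hT.map_map a _ s t hsn hst x⟩
  obtain ⟨w, hw⟩ := IsCompact.nonempty_iInter_of_sequence_nonempty_isCompact_isClosed K
    (fun n => inter_subset_inter_left _ (hA.antitone_image_sub_nat hT s a n.le_succ)) hKne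
    (hK 0) fun n => (hK n).isClosed
  rw [← iInter_inter] at hw
  exact ⟨w, hw.1, hw.2⟩

variable [BorelSpace X] [TopologicalSpace.SeparableSpace X] [CompleteSpace X] [Nonempty X]

theorem measurable_infEDist_pullbackLimit (hT : IsCaratheodoryCocycle T)
    (hA : IsCompactInvariantFamily T A) (t : ℝ) (x : X) :
    Measurable fun a => infEDist x (pullbackLimit T A t a) := by
  refine measurable_infEDist_iInter (fun a => hA.antitone_image_sub_nat hT t a)
    (fun n a => hA.isCompact_image_sub_nat hT t a n) (fun n a => (hA.nonempty _ a).image _)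
    (fun n y => ?_) x
  have hle : t - n ≤ t := by linarith [n.cast_nonneg (α := ℝ)]
  obtain ⟨c, hc⟩ := exists_isCastaingRepresentation (fun a => (hA.isCompact _ a).isClosed)
    (hA.nonempty (t - n)) (hA.measurable_infEDist · (t - n))
  exact measurable_infEDist_image hc (fun a => hT.continuous a _ t hle)
    (hT.measurable _ t hle) y

theorem exists_measurable_backward_orbit (hT : IsCaratheodoryCocycle T)
    (hA : IsCompactInvariantFamily T A) :
    ∃ z : ℕ → α → X, (∀ m, Measurable (z m)) ∧
      (∀ (m : ℕ) a, z m a ∈ pullbackLimit T A (-m) a) ∧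
      ∀ (m : ℕ) a, T (-m) (-(m + 1 : ℕ)) a (z (m + 1) a) = z m a := by
  obtain ⟨z₀, hz₀, hz₀P⟩ := exists_measurable_selection
    (fun a => (hA.isCompact_pullbackLimit hT (-(0 : ℕ)) a).isClosed)
    (hA.pullbackLimit_nonempty hT _) (hA.measurable_infEDist_pullbackLimit hT _)
  obtain ⟨z, -, hz, hzz⟩ := exists_seq_of_exists_succ
    (P := fun m z => Measurable z ∧ ∀ a, z a ∈ pullbackLimit T A (-m) a)
    (R := fun m z z' => ∀ a, T (-m) (-(m + 1 : ℕ)) a (z' a) = z a) ⟨hz₀, hz₀P⟩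
    fun m z hz => by
      have hm : -((m + 1 : ℕ) : ℝ) ≤ -m := by push_cast; linarith
      obtain ⟨c, hc⟩ := exists_isCastaingRepresentation
        (fun a => (hA.isCompact_pullbackLimit hT _ a).isClosed) (hA.pullbackLimit_nonempty hT _)
        (hA.measurable_infEDist_pullbackLimit hT (-(m + 1 : ℕ)))
      obtain ⟨z', hz', hz'G⟩ := exists_measurable_selection
        (F := fun a => pullbackLimit T A (-(m + 1 : ℕ)) a ∩ T (-m) (-(m + 1 : ℕ)) a ⁻¹' {z a})
        (fun a => (hA.isCompact_pullbackLimit hT _ a).isClosed.inter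
          (isClosed_singleton.preimage (hT.continuous a _ _ hm)))
        (fun a => hA.exists_mem_pullbackLimit_map_eq hT a hm (hz.2 a))
        (measurable_infEDist_inter_preimage_singleton hc (hA.isCompact_pullbackLimit hT _)
          (fun a => hT.continuous a _ _ hm) (hT.measurable _ _ hm) hz.1
          (fun a => hA.exists_mem_pullbackLimit_map_eq hT a hm (hz.2 a)))
      exact ⟨z', ⟨hz', fun a => (hz'G a).1⟩, fun a => (hz'G a).2⟩
  exact ⟨z, fun m => (hz m).1, fun m => (hz m).2, hzz⟩

theorem exists_measurable_entire_orbit (hT : IsCaratheodoryCocycle T)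
    (hA : IsCompactInvariantFamily T A) :
    ∃ x : ℝ → α → X, (∀ t, Measurable (x t)) ∧ (∀ t a, x t a ∈ A t a) ∧
      ∀ a s t, s ≤ t → T t s a (x s a) = x t a := by
  obtain ⟨z, hzm, hzP, hzz⟩ := hA.exists_measurable_backward_orbit hT
  have hceil : ∀ t : ℝ, -(⌈-t⌉₊ : ℝ) ≤ t := fun t => by linarith [Nat.le_ceil (-t)]
  refine ⟨fun t a => T t (-⌈-t⌉₊) a (z ⌈-t⌉₊ a),
    fun t => (hzm _).caratheodory (fun a => hT.continuous a _ t (hceil t))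
      (hT.measurable _ t (hceil t)),
    fun t a => hA.mapsTo a _ t (hceil t) (hA.pullbackLimit_subset hT _ a (hzP _ a)),
    fun a s t hst => ?_⟩
  have hceil_le : ⌈-t⌉₊ ≤ ⌈-s⌉₊ := Nat.ceil_mono (neg_le_neg hst)
  have hcast : -(⌈-s⌉₊ : ℝ) ≤ -(⌈-t⌉₊ : ℝ) := neg_le_neg (Nat.cast_le.2 hceil_le)
  calc T t s a (T s (-⌈-s⌉₊) a (z ⌈-s⌉₊ a))
      = T t (-⌈-t⌉₊) a (T (-⌈-t⌉₊) (-⌈-s⌉₊) a (z ⌈-s⌉₊ a)) := by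
        rw [hT.map_map a _ _ _ hcast (hceil t), hT.map_map a _ _ _ (hceil s) hst]
    _ = T t (-⌈-t⌉₊) a (z ⌈-t⌉₊ a) := by
        rw [map_backward_orbit_of_le (hT.map_map a) (hT.map_self a) (z := (z · a)) (hzz · a)
          hceil_le]

end IsCompactInvariantFamily

end Cocycle

theorem stmt4_general {Ω X : Type*} [MeasurableSpace Ω] [MetricSpace X] [CompleteSpace X]
    [TopologicalSpace.SeparableSpace X] [MeasurableSpace X] [BorelSpace X]
    (ℙ : Measure Ω)
    (S : ℝ → ℝ → Ω → X → X) (hS : IsStochasticFlow ℙ S)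
    (A : ℝ → Ω → Set X)
    (Ω₀ : Set Ω) (hΩ₀ : ℙ Ω₀ = 1)
    (hflow : ∀ ω ∈ Ω₀,
      (∀ s r t : ℝ, s ≤ r → r ≤ t → ∀ x : X, S t r ω (S r s ω x) = S t s ω x) ∧
      (∀ s t : ℝ, s ≤ t → Continuous fun x : X => S t s ω x) ∧
      (∀ t : ℝ, ∀ x : X, S t t ω x = x))
    (ha : ∀ (x : X) (t : ℝ), Measurable fun ω => Metric.infDist x (A t ω))
    (hb : ∀ ω ∈ Ω₀, ∀ t : ℝ, (A t ω).Nonempty ∧ IsCompact (A t ω))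
    (hc : ∀ ω ∈ Ω₀, ∀ s t : ℝ, s ≤ t → S t s ω '' A s ω ⊆ A t ω) :
    ∃ x : ℝ → Ω → X,
      (∀ t : ℝ, Measurable fun ω : Ω₀ => x t ω.1) ∧
      (∀ ω ∈ Ω₀, ∀ t : ℝ, x t ω ∈ A t ω) ∧
      (∀ ω ∈ Ω₀, ∀ s t : ℝ, s ≤ t → S t s ω (x s ω) = x t ω) := by
  obtain ⟨ω₀, hω₀⟩ : Ω₀.Nonempty := nonempty_of_measure_ne_zero (hΩ₀ ▸ one_ne_zero)
  have : Nonempty X := (hb ω₀ hω₀ 0).1.to_subtype.map Subtype.val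
  have hT : IsCaratheodoryCocycle fun t s (ω : Ω₀) => S t s ω :=
    { map_map := fun ω => (hflow ω ω.2).1
      map_self := fun ω => (hflow ω ω.2).2.2
      continuous := fun ω => (hflow ω ω.2).2.1
      measurable := fun s t hst x =>
        (hS.2 t x).comp ((measurable_const (a := ⟨s, hst⟩)).prodMk measurable_subtype_coe) }
  have hA : IsCompactInvariantFamily (fun t s (ω : Ω₀) => S t s ω) fun t (ω : Ω₀) => A t ω :=
    { nonempty := fun t ω => (hb ω ω.2 t).1
      isCompact := fun t ω => (hb ω ω.2 t).2
      mapsTo := fun ω s t hst => mapsTo_iff_image_subset.2 (hc ω ω.2 s t hst)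
      measurable_infEDist := fun x t => by
        have h : ∀ ω : Ω₀, infEDist x (A t ω) = ENNReal.ofReal (infDist x (A t ω)) := fun ω =>
          (ENNReal.ofReal_toReal (infEDist_ne_top (hb ω ω.2 t).1)).symm
        simp_rw [h]
        exact ((ha x t).comp measurable_subtype_coe).ennreal_ofReal }
  obtain ⟨x, hxm, hxA, hxS⟩ := hA.exists_measurable_entire_orbit hT
  classical
  refine ⟨fun t ω => if h : ω ∈ Ω₀ then x t ⟨ω, h⟩ else x t ⟨ω₀, hω₀⟩, fun t => ?_,
    fun ω hω t => by simpa [hω] using hxA t ⟨ω, hω⟩,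
    fun ω hω s t hst => by simpa [hω] using hxS ⟨ω, hω⟩ s t hst⟩
  simp [hxm t]

/-- given a compact forward invariant family `A t ω` for the stochastic flow
`S` (with the flow identities (i), (ii), (iv) holding on the full-measure set `Ω₀`), there
exist measurable selections `x_t : Ω₀ → X` with `x_t(ω) ∈ A(t,ω)` and
`S(t,s;ω) x_s(ω) = x_t(ω)` for all `ω ∈ Ω₀` and all `s ≤ t`. -/
theorem stmt4 {Ω X : Type*} [MeasurableSpace Ω] [MetricSpace X] [CompleteSpace X]
    [TopologicalSpace.SeparableSpace X] [MeasurableSpace X] [BorelSpace X]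
    (ℙ : Measure Ω) [IsProbabilityMeasure ℙ]
    (S : ℝ → ℝ → Ω → X → X) (hS : IsStochasticFlow ℙ S)
    (A : ℝ → Ω → Set X)
    (Ω₀ : Set Ω) (hΩ₀m : MeasurableSet Ω₀) (hΩ₀ : ℙ Ω₀ = 1)
    (hflow : ∀ ω ∈ Ω₀,
      (∀ s r t : ℝ, s ≤ r → r ≤ t → ∀ x : X, S t r ω (S r s ω x) = S t s ω x) ∧
      (∀ s t : ℝ, s ≤ t → Continuous fun x : X => S t s ω x) ∧
      (∀ t : ℝ, ∀ x : X, S t t ω x = x))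
    (ha : ∀ (x : X) (t : ℝ), Measurable fun ω => Metric.infDist x (A t ω))
    (hb : ∀ ω ∈ Ω₀, ∀ t : ℝ, (A t ω).Nonempty ∧ IsCompact (A t ω))
    (hc : ∀ ω ∈ Ω₀, ∀ s t : ℝ, s ≤ t → S t s ω '' A s ω ⊆ A t ω) :
    ∃ x : ℝ → Ω → X,
      (∀ t : ℝ, Measurable fun ω : Ω₀ => x t ω.1) ∧
      (∀ ω ∈ Ω₀, ∀ t : ℝ, x t ω ∈ A t ω) ∧
      (∀ ω ∈ Ω₀, ∀ s t : ℝ, s ≤ t → S t s ω (x s ω) = x t ω) :=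
  stmt4_general ℙ S hS A Ω₀ hΩ₀ hflow ha hb hc
end

section
/- Let (Ω,𝓕,ℙ) be a probability space, 𝓖 a sub-σ-algebra of 𝓕, and (E,d) a Polish space with Borel σ-algebra 𝓔. Let f : Ω×E → ℝ be a bounded 𝓖⊗𝓔-measurable function, and let (μ_ω)_{ω∈Ω} be a random probability measure on E which is independent of 𝓖, i.e. (i) ω ↦ μ_ω(A) is 𝓕-measurable and independent of 𝓖 for each A ∈ 𝓔, and (ii) μ_ω is a probability measure for each ω. Define the probability measure ρ on (E,𝓔) by ρ(A) := 𝔼[μ_ω(A)]. Then ℙ-almost surely, 𝔼[ ∫_E f(ω,x) μ_ω(dx) | 𝓖 ](ω) = ∫_E f(ω,x) ρ(dx). -/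
open MeasureTheory Filter Topology

open Set
open scoped ENNReal
open ProbabilityTheory (Kernel IsMarkovKernel)

theorem stmt6_aux {Ω E : Type*} (𝓖 : MeasurableSpace Ω) [m : MeasurableSpace Ω]
    [MetricSpace E] [CompleteSpace E] [TopologicalSpace.SeparableSpace E]
    [MeasurableSpace E] [BorelSpace E]
    (P : Measure Ω) [IsProbabilityMeasure P]
    (h𝓖 : 𝓖 ≤ m)
    (f : Ω × E → ℝ)
    (hfm : Measurable[𝓖.prod (inferInstance : MeasurableSpace E)] f)
    (C : ℝ) (hfb : ∀ p : Ω × E, |f p| ≤ C)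
    (μ : Ω → Measure E)
    (hprob : ∀ ω : Ω, IsProbabilityMeasure (μ ω))
    (hmeas : ∀ A : Set E, MeasurableSet A → Measurable fun ω => μ ω A)
    (hindep : ∀ A : Set E, MeasurableSet A →
      ProbabilityTheory.Indep
        (MeasurableSpace.comap (fun ω => μ ω A) inferInstance) 𝓖 P)
    (ρ : Measure E) (hρ : ∀ A : Set E, MeasurableSet A → ρ A = ∫⁻ ω, μ ω A ∂P) :
    P[(fun ω => ∫ x, f (ω, x) ∂(μ ω)) | 𝓖] =ᵐ[P] fun ω => ∫ x, f (ω, x) ∂ρ := by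
  haveI hρ_prob : IsProbabilityMeasure ρ := by
    constructor
    rw [hρ _ MeasurableSet.univ]
    simp [fun ω => (hprob ω).measure_univ]
  -- the kernel
  let κ : Kernel Ω E :=
    { toFun := μ
      measurable' := Measure.measurable_of_measurable_coe μ hmeas }
  have hκapp : ∀ ω, κ ω = μ ω := fun ω => rfl
  haveI : IsMarkovKernel κ := ⟨fun ω => by rw [hκapp]; exact hprob ω⟩
  have hle : 𝓖.prod (inferInstance : MeasurableSpace E) ≤
      m.prod (inferInstance : MeasurableSpace E) :=
    sup_le_sup (MeasurableSpace.comap_mono h𝓖) le_rfl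
  have hfm' : Measurable f := hfm.mono hle le_rfl
  have hf_sm : StronglyMeasurable f := hfm'.stronglyMeasurable
  have hf_smG : StronglyMeasurable[𝓖.prod (inferInstance : MeasurableSpace E)] f :=
    hfm.stronglyMeasurable
  have hfb' : ∀ p : Ω × E, ‖f p‖ ≤ C := by simpa [Real.norm_eq_abs] using hfb
  -- measurability and integrability of both sides
  have hg_sm : StronglyMeasurable fun ω => ∫ x, f (ω, x) ∂(μ ω) := by
    have := hf_sm.integral_kernel_prod_right' (κ := κ)
    simpa [hκapp] using this
  have hg_int : Integrable (fun ω => ∫ x, f (ω, x) ∂(μ ω)) P := by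
    refine Integrable.mono' (integrable_const C) hg_sm.aestronglyMeasurable ?_
    filter_upwards with ω
    calc ‖∫ x, f (ω, x) ∂(μ ω)‖ ≤ C * ((μ ω) univ).toReal :=
          norm_integral_le_of_norm_le_const (Eventually.of_forall fun x => hfb' (ω, x))
      _ = C := by rw [(hprob ω).measure_univ]; simp
  have hh_smG : StronglyMeasurable[𝓖] fun ω => ∫ x, f (ω, x) ∂ρ :=
    @MeasureTheory.StronglyMeasurable.integral_prod_right' Ω E ℝ 𝓖 _ ρ _ _ _ f hf_smG
  have hh_int : Integrable (fun ω => ∫ x, f (ω, x) ∂ρ) P := by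
    refine Integrable.mono' (integrable_const C)
      ((hh_smG.mono h𝓖).aestronglyMeasurable) ?_
    filter_upwards with ω
    calc ‖∫ x, f (ω, x) ∂ρ‖ ≤ C * (ρ univ).toReal :=
          norm_integral_le_of_norm_le_const (Eventually.of_forall fun x => hfb' (ω, x))
      _ = C := by simp
  -- key independence computation
  have key : ∀ A : Set E, MeasurableSet A → ∀ s : Set Ω, MeasurableSet[𝓖] s →
      ∫⁻ ω in s, μ ω A ∂P = P s * ρ A := by
    intro A hA s hs
    have h1 : ∫⁻ ω in s, μ ω A ∂P
        = ∫⁻ ω, μ ω A * s.indicator (1 : Ω → ℝ≥0∞) ω ∂P := by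
      rw [← lintegral_indicator (h𝓖 s hs)]
      congr 1 with ω
      by_cases hω : ω ∈ s <;> simp [hω]
    have h2 : ∫⁻ ω, μ ω A * s.indicator (1 : Ω → ℝ≥0∞) ω ∂P
        = (∫⁻ ω, μ ω A ∂P) * ∫⁻ ω, s.indicator (1 : Ω → ℝ≥0∞) ω ∂P :=
      ProbabilityTheory.lintegral_mul_eq_lintegral_mul_lintegral_of_independent_measurableSpace
        (f := fun ω => μ ω A) (g := s.indicator (1 : Ω → ℝ≥0∞))
        (measurable_iff_comap_le.mp (hmeas A hA)) h𝓖 (hindep A hA)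
        (Measurable.of_comap_le le_rfl)
        ((measurable_const : Measurable[𝓖] (1 : Ω → ℝ≥0∞)).indicator hs)
    rw [h1, h2, lintegral_indicator_one (h𝓖 s hs), hρ A hA, mul_comm]
  -- equality of the two measures on the sub-σ-algebra
  have hmeq : ∀ s : Set Ω, MeasurableSet[𝓖] s →
      (Measure.compProd (P.restrict s) κ).trim hle = ((P.restrict s).prod ρ).trim hle := by
    intro s hs
    refine ext_of_generate_finite _ (@generateFrom_prod Ω E 𝓖 _).symm
      (@isPiSystem_prod Ω E 𝓖 _) ?_ ?_
    · rintro t ⟨u, hu, v, hv, rfl⟩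
      simp only [Set.mem_setOf_eq] at hu hv
      rw [trim_measurableSet_eq hle (@MeasurableSet.prod Ω E 𝓖 _ _ _ hu hv),
        trim_measurableSet_eq hle (@MeasurableSet.prod Ω E 𝓖 _ _ _ hu hv),
        Measure.compProd_apply_prod (h𝓖 _ hu) hv, Measure.prod_prod]
      simp only [hκapp]
      rw [Measure.restrict_restrict (h𝓖 _ hu), Measure.restrict_apply (h𝓖 _ hu),
        key v hv (u ∩ s) (hu.inter hs)]
    · rw [trim_measurableSet_eq hle MeasurableSet.univ,
        trim_measurableSet_eq hle MeasurableSet.univ,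
        Measure.compProd_apply_univ, ← Set.univ_prod_univ, Measure.prod_prod]
      simp
  -- set integral equality
  have heq : ∀ s : Set Ω, MeasurableSet[𝓖] s →
      ∫ ω in s, (∫ x, f (ω, x) ∂ρ) ∂P = ∫ ω in s, (∫ x, f (ω, x) ∂(μ ω)) ∂P := by
    intro s hs
    have hint1 : Integrable f (Measure.compProd (P.restrict s) κ) :=
      Integrable.mono' (integrable_const C) hf_sm.aestronglyMeasurable
        (Eventually.of_forall hfb')
    have hint2 : Integrable f ((P.restrict s).prod ρ) :=
      Integrable.mono' (integrable_const C) hf_sm.aestronglyMeasurable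
        (Eventually.of_forall hfb')
    calc ∫ ω in s, (∫ x, f (ω, x) ∂ρ) ∂P
        = ∫ p, f p ∂((P.restrict s).prod ρ) := (MeasureTheory.integral_prod f hint2).symm
      _ = ∫ p, f p ∂(((P.restrict s).prod ρ).trim hle) := integral_trim hle hf_smG
      _ = ∫ p, f p ∂((Measure.compProd (P.restrict s) κ).trim hle) := by rw [hmeq s hs]
      _ = ∫ p, f p ∂(Measure.compProd (P.restrict s) κ) := (integral_trim hle hf_smG).symm
      _ = ∫ ω, ∫ x, f (ω, x) ∂(κ ω) ∂(P.restrict s) := Measure.integral_compProd hint1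
      _ = ∫ ω in s, (∫ x, f (ω, x) ∂(μ ω)) ∂P := by simp only [hκapp]
  haveI : SigmaFinite (P.trim h𝓖) := inferInstance
  exact (ae_eq_condExp_of_forall_setIntegral_eq h𝓖 hg_int
    (fun s hs _ => hh_int.integrableOn) (fun s hs _ => heq s hs)
    (hh_smG.aestronglyMeasurable)).symm

/-- Lemma 1.5: let `𝓖` be a sub-σ-algebra of `𝓕`, `(E,d)` Polish,
`f : Ω × E → ℝ` bounded and `𝓖 ⊗ 𝓔`-measurable, and `(μ_ω)` a random probability
measure on `E` independent of `𝓖`. Define `ρ(A) := 𝔼[μ_ω(A)]`. Then almost surely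
`𝔼[∫ f(ω,x) μ_ω(dx) | 𝓖](ω) = ∫ f(ω,x) ρ(dx)`. -/
theorem stmt6 {Ω E : Type*} (𝓖 : MeasurableSpace Ω) [m : MeasurableSpace Ω]
    [MetricSpace E] [CompleteSpace E] [TopologicalSpace.SeparableSpace E]
    [MeasurableSpace E] [BorelSpace E]
    (ℙ : Measure Ω) [IsProbabilityMeasure ℙ]
    (h𝓖 : 𝓖 ≤ m)
    (f : Ω × E → ℝ)
    (hfm : Measurable[𝓖.prod (inferInstance : MeasurableSpace E)] f)
    (C : ℝ) (hfb : ∀ p : Ω × E, |f p| ≤ C)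
    (μ : Ω → Measure E)
    (hprob : ∀ ω : Ω, IsProbabilityMeasure (μ ω))
    (hmeas : ∀ A : Set E, MeasurableSet A → Measurable fun ω => μ ω A)
    (hindep : ∀ A : Set E, MeasurableSet A →
      ProbabilityTheory.Indep
        (MeasurableSpace.comap (fun ω => μ ω A) inferInstance) 𝓖 ℙ)
    (ρ : Measure E) (hρ : ∀ A : Set E, MeasurableSet A → ρ A = ∫⁻ ω, μ ω A ∂ℙ) :
    ℙ[(fun ω => ∫ x, f (ω, x) ∂(μ ω)) | 𝓖] =ᵐ[ℙ] fun ω => ∫ x, f (ω, x) ∂ρ := by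
  exact
  @stmt6_aux Ω E 𝓖 m _ _ _ _ _ ℙ _ h𝓖 f hfm C hfb μ hprob
    (fun A hA => (hmeas A hA)) hindep ρ hρ
end

section
/- Let S be a white noise stochastic flow on a Polish space X with Markov semigroup P_{st}f(x) := 𝔼[f(S(t,s;·)x)], and let {ρ_s}_{s∈ℝ} be an evolution system of measures for {P_{st}}. Fix t ∈ ℝ and a bounded measurable function f : X → ℝ. Then the process M_s(ω) := ∫_X f(S(t,t−s;ω)x) ρ_{t−s}(dx), s ≥ 0, is a bounded martingale with respect to the filtration 𝓖_s := 𝓕_{≥ t−s}. -/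
open MeasureTheory Filter Topology

/-- The `ℙ`-completion of a sub-σ-algebra `m`: generated by all sets differing from an
`m`-measurable set by a `ℙ`-null set. -/
def completionOf {Ω : Type*} [MeasurableSpace Ω] (ℙ : Measure Ω)
    (m : MeasurableSpace Ω) : MeasurableSpace Ω :=
  MeasurableSpace.generateFrom {A | ∃ B : Set Ω, MeasurableSet[m] B ∧ ℙ (symmDiff A B) = 0}

/-- The σ-algebra generated by the random variables `ω ↦ S u t ω x` with `s ≤ t ≤ u`. -/
def sigmaGe {Ω X : Type*} [MeasurableSpace X] (S : ℝ → ℝ → Ω → X → X) (s : ℝ) :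
    MeasurableSpace Ω :=
  MeasurableSpace.generateFrom
    {A | ∃ (t u : ℝ) (x : X) (B : Set X), s ≤ t ∧ t ≤ u ∧ MeasurableSet B ∧
      A = {ω | S u t ω x ∈ B}}

/-- The σ-algebra generated by the random variables `ω ↦ S u t ω x` with `t ≤ u ≤ s`. -/
def sigmaLe {Ω X : Type*} [MeasurableSpace X] (S : ℝ → ℝ → Ω → X → X) (s : ℝ) :
    MeasurableSpace Ω :=
  MeasurableSpace.generateFrom
    {A | ∃ (t u : ℝ) (x : X) (B : Set X), t ≤ u ∧ u ≤ s ∧ MeasurableSet B ∧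
      A = {ω | S u t ω x ∈ B}}

/-- `𝓕_{≥ s}`: the `ℙ`-completion of the σ-algebra generated by the flow after time `s`. -/
def Fge {Ω X : Type*} [MeasurableSpace Ω] [MeasurableSpace X]
    (ℙ : Measure Ω) (S : ℝ → ℝ → Ω → X → X) (s : ℝ) : MeasurableSpace Ω :=
  completionOf ℙ (sigmaGe S s)

/-- `𝓕_{≤ s}`: the `ℙ`-completion of the σ-algebra generated by the flow before time `s`. -/
def Fle {Ω X : Type*} [MeasurableSpace Ω] [MeasurableSpace X]
    (ℙ : Measure Ω) (S : ℝ → ℝ → Ω → X → X) (s : ℝ) : MeasurableSpace Ω :=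
  completionOf ℙ (sigmaLe S s)

/-- A white noise stochastic flow: a stochastic flow such that for every `s ∈ ℝ`, the
σ-algebras `𝓕_{≥ s}` and `𝓕_{≤ s}` are independent. -/
def IsWhiteNoiseFlow {Ω X : Type*} [MeasurableSpace Ω] [MetricSpace X]
    [MeasurableSpace X] [BorelSpace X]
    (ℙ : Measure Ω) (S : ℝ → ℝ → Ω → X → X) : Prop :=
  IsStochasticFlow ℙ S ∧
  ∀ s : ℝ, ProbabilityTheory.Indep (Fge ℙ S s) (Fle ℙ S s) ℙ

/-- An evolution system of measures for the Markov transition semigroup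
`P_{st} f x = 𝔼[f (S t s · x)]` associated to the flow `S`: a family of Borel
probability measures `ρ s` on `X` with `P_{st} ρ_s = ρ_t` for all `s ≤ t`. -/
def IsMarkovEvolutionSystem {Ω X : Type*} [MeasurableSpace Ω] [MeasurableSpace X]
    (ℙ : Measure Ω) (S : ℝ → ℝ → Ω → X → X) (ρ : ℝ → Measure X) : Prop :=
  (∀ t : ℝ, IsProbabilityMeasure (ρ t)) ∧
  (∀ s t : ℝ, s ≤ t → ∀ B : Set X, MeasurableSet B →
    (∫⁻ x, ℙ {ω | S t s ω x ∈ B} ∂(ρ s)) = ρ t B)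

/-!
Write `a = t - u ≤ b = t - s`. By the cocycle property `S(t,a) = S(t,b) ∘ S(b,a)`, where
`S(t,b)` is `𝓕_{≥b}`-measurable while `S(b,a)` is `𝓕_{≤b}`-measurable and hence independent of
`𝓕_{≥b}`. Conditioning on `𝓕_{≥b}` therefore freezes `S(t,b)` and averages out `S(b,a)`:
`𝔼[M_u | 𝓕_{≥b}] = ∫ f(S(t,b) y) (P_{ab} ρ_a)(dy) = ∫ f(S(t,b) y) ρ_b(dy) = M_s`.
For the conditional expectation to be computed by Fubini, `ω ↦ S(t,b;ω)` must be jointly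
measurable in `(ω, x)`; this is arranged by first modifying the flow on a null set so that it is
continuous in `x` for every `ω`.
-/

lemma norm_integral_le_of_forall_norm_le {α E : Type*} [MeasurableSpace α] [NormedAddCommGroup E]
    [NormedSpace ℝ E] {μ : Measure α} [IsProbabilityMeasure μ] {f : α → E} {C : ℝ}
    (h : ∀ a, ‖f a‖ ≤ C) : ‖∫ a, f a ∂μ‖ ≤ C := by
  simpa using norm_integral_le_of_norm_le_const (μ := μ) (.of_forall h)

section Completion

variable {Ω β : Type*} {m m0 : MeasurableSpace Ω} {ℙ : Measure Ω}

lemma le_completionOf : m ≤ completionOf ℙ m := fun A hA =>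
  MeasurableSpace.measurableSet_generateFrom ⟨A, hA, by simp⟩

lemma exists_measurableSet_ae_eq_of_measurableSet_completionOf {A : Set Ω}
    (hA : MeasurableSet[completionOf ℙ m] A) : ∃ B, MeasurableSet[m] B ∧ A =ᵐ[ℙ] B := by
  induction A, hA using MeasurableSpace.generateFrom_induction with
  | hC A hA _ =>
    obtain ⟨B, hB, hAB⟩ := hA
    exact ⟨B, hB, measure_symmDiff_eq_zero_iff.1 hAB⟩
  | empty => exact ⟨∅, @MeasurableSet.empty Ω m, by rfl⟩
  | compl A _ hA =>
    obtain ⟨B, hB, hAB⟩ := hA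
    exact ⟨Bᶜ, hB.compl, hAB.compl⟩
  | iUnion A _ hA =>
    choose B hB hAB using hA
    exact ⟨⋃ n, B n, MeasurableSet.iUnion hB, Filter.EventuallyEq.countable_iUnion hAB⟩

lemma Measurable.completionOf_congr [MeasurableSpace β] {g h : Ω → β}
    (hg : Measurable[completionOf ℙ m] g) (hgh : g =ᵐ[ℙ] h) : Measurable[completionOf ℙ m] h := by
  intro B hB
  obtain ⟨B', hB', hgB'⟩ := exists_measurableSet_ae_eq_of_measurableSet_completionOf (hg hB)
  exact MeasurableSpace.measurableSet_generateFrom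
    ⟨B', hB', measure_symmDiff_eq_zero_iff.2 ((hgh.preimage B).symm.trans hgB')⟩

lemma completionOf_le [ℙ.IsComplete] (hm : m ≤ m0) : completionOf ℙ m ≤ m0 := by
  refine MeasurableSpace.generateFrom_le ?_
  rintro A ⟨B, hB, hAB⟩
  exact ((hm B hB).nullMeasurableSet.congr
    (measure_symmDiff_eq_zero_iff.1 hAB).symm).measurable_of_complete

end Completion

section Independence

variable {Ω V X Y : Type*} {m0 : MeasurableSpace Ω} {mV : MeasurableSpace V} [MeasurableSpace X]
  [MeasurableSpace Y] {ℙ : Measure Ω} [IsProbabilityMeasure ℙ]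

lemma ProbabilityTheory.IndepFun.integral_comp_eq_integral_integral {W : Ω → V} {Z : Ω → Y}
    (hWZ : ProbabilityTheory.IndepFun W Z ℙ) (hW : Measurable W) (hZ : Measurable Z)
    {φ : V × Y → ℝ} (hφ : Measurable φ) {C : ℝ} (hφC : ∀ p, ‖φ p‖ ≤ C) :
    ∫ ω, φ (W ω, Z ω) ∂ℙ = ∫ ω, ∫ ω', φ (W ω, Z ω') ∂ℙ ∂ℙ := by
  have hlaw : ℙ.map (fun ω => (W ω, Z ω)) = (ℙ.map W).prod (ℙ.map Z) :=
    (ProbabilityTheory.indepFun_iff_map_prod_eq_prod_map_map hW.aemeasurable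
      hZ.aemeasurable).1 hWZ
  have : IsProbabilityMeasure (ℙ.map W) := Measure.isProbabilityMeasure_map hW.aemeasurable
  have : IsProbabilityMeasure (ℙ.map Z) := Measure.isProbabilityMeasure_map hZ.aemeasurable
  have hφs := hφ.stronglyMeasurable
  calc ∫ ω, φ (W ω, Z ω) ∂ℙ
      = ∫ p, φ p ∂((ℙ.map W).prod (ℙ.map Z)) := by
        rw [← hlaw, integral_map (hW.prodMk hZ).aemeasurable hφs.aestronglyMeasurable]
    _ = ∫ v, ∫ y, φ (v, y) ∂(ℙ.map Z) ∂(ℙ.map W) :=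
        integral_prod φ (Integrable.of_bound hφs.aestronglyMeasurable C (.of_forall hφC))
    _ = ∫ ω, ∫ ω', φ (W ω, Z ω') ∂ℙ ∂ℙ := by
        rw [integral_map hW.aemeasurable hφs.integral_prod_right'.aestronglyMeasurable]
        refine integral_congr_ae (.of_forall fun ω => ?_)
        exact integral_map hZ.aemeasurable
          (hφ.comp measurable_prodMk_left).stronglyMeasurable.aestronglyMeasurable

end Independence

section RandomMap

open Function

variable {Ω X Y : Type*} {m₁ m₂ m0 : MeasurableSpace Ω} [MeasurableSpace X] [MeasurableSpace Y]
  {ℙ : Measure Ω} [IsProbabilityMeasure ℙ] {ν : Measure X} [IsProbabilityMeasure ν]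
  {Φ : Ω × Y → ℝ} {C : ℝ} {H : Ω → X → Y}

lemma integral_integral_comp_eq_integral_integral_map_of_indep (hm₁ : m₁ ≤ m0)
    (hind : ProbabilityTheory.Indep m₁ m₂ ℙ)
    (hΦ : Measurable[@Prod.instMeasurableSpace Ω Y m₁ _] Φ) (hΦC : ∀ p, ‖Φ p‖ ≤ C)
    (hH : Measurable (uncurry H)) (hH₂ : ∀ x, Measurable[m₂] fun ω => H ω x) :
    ∫ ω, ∫ x, Φ (ω, H ω x) ∂ν ∂ℙ = ∫ ω, ∫ y, Φ (ω, y) ∂((ℙ.prod ν).map (uncurry H)) ∂ℙ := by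
  have hid : Measurable[m0, m₁] id := measurable_id'' hm₁
  have hΦ0 : Measurable Φ := hΦ.comp (hid.prodMap measurable_id)
  have hHx : ∀ x, Measurable fun ω => H ω x := fun x => hH.comp measurable_prodMk_right
  have hindFun : ∀ x, @ProbabilityTheory.IndepFun Ω Ω Y m0 m₁ _ id (fun ω => H ω x) ℙ := by
    intro x
    change ProbabilityTheory.Indep (MeasurableSpace.comap id m₁) _ ℙ
    rw [MeasurableSpace.comap_id]
    exact ProbabilityTheory.indep_of_indep_of_le_right hind (hH₂ x).comap_le
  have hint₁ : Integrable (uncurry fun ω x => Φ (ω, H ω x)) (ℙ.prod ν) :=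
    .of_bound (hΦ0.comp (measurable_fst.prodMk hH)).aestronglyMeasurable C
      (.of_forall fun _ => hΦC _)
  have hint₂ : Integrable (uncurry fun x ω => ∫ ω', Φ (ω, H ω' x) ∂ℙ) (ν.prod ℙ) := by
    refine .of_bound (StronglyMeasurable.integral_prod_right'
      (f := fun q : (X × Ω) × Ω => Φ (q.1.2, H q.2 q.1.1)) ?_).aestronglyMeasurable C
      (.of_forall fun _ => ?_)
    · exact (hΦ0.comp ((measurable_snd.comp measurable_fst).prodMk
        (hH.comp (measurable_snd.prodMk (measurable_fst.comp measurable_fst))))).stronglyMeasurable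
    · exact norm_integral_le_of_forall_norm_le fun _ => hΦC _
  calc ∫ ω, ∫ x, Φ (ω, H ω x) ∂ν ∂ℙ
      = ∫ x, ∫ ω, Φ (ω, H ω x) ∂ℙ ∂ν := integral_integral_swap hint₁
    _ = ∫ x, ∫ ω, ∫ ω', Φ (ω, H ω' x) ∂ℙ ∂ℙ ∂ν :=
        integral_congr_ae (.of_forall fun x =>
          (hindFun x).integral_comp_eq_integral_integral hid (hHx x) hΦ hΦC)
    _ = ∫ ω, ∫ x, ∫ ω', Φ (ω, H ω' x) ∂ℙ ∂ν ∂ℙ := integral_integral_swap hint₂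
    _ = ∫ ω, ∫ y, Φ (ω, y) ∂((ℙ.prod ν).map (uncurry H)) ∂ℙ := by
        refine integral_congr_ae (.of_forall fun ω => ?_)
        dsimp only
        have hΦω : Measurable fun y => Φ (ω, y) := hΦ0.comp measurable_prodMk_left
        rw [integral_map hH.aemeasurable hΦω.aestronglyMeasurable]
        exact (integral_prod_symm _
          (.of_bound (hΦω.comp hH).aestronglyMeasurable C (.of_forall fun _ => hΦC _))).symm

lemma condExp_integral_comp_ae_eq_of_indep (hm₁ : m₁ ≤ m0)
    (hind : ProbabilityTheory.Indep m₁ m₂ ℙ)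
    (hΦ : Measurable[@Prod.instMeasurableSpace Ω Y m₁ _] Φ) (hΦC : ∀ p, ‖Φ p‖ ≤ C)
    (hH : Measurable (uncurry H)) (hH₂ : ∀ x, Measurable[m₂] fun ω => H ω x) :
    ℙ[fun ω => ∫ x, Φ (ω, H ω x) ∂ν | m₁]
      =ᵐ[ℙ] fun ω => ∫ y, Φ (ω, y) ∂((ℙ.prod ν).map (uncurry H)) := by
  set ν' := (ℙ.prod ν).map (uncurry H)
  have : IsProbabilityMeasure ν' := Measure.isProbabilityMeasure_map hH.aemeasurable
  have hΦ0 : Measurable Φ := hΦ.comp ((measurable_id'' hm₁).prodMap measurable_id)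
  have hsm₁ : StronglyMeasurable[m₁] fun ω => ∫ y, Φ (ω, y) ∂ν' :=
    @StronglyMeasurable.integral_prod_right' Ω Y ℝ m₁ _ ν' _ _ _ _ hΦ.stronglyMeasurable
  refine (ae_eq_condExp_of_forall_setIntegral_eq hm₁ ?_ (fun A _ _ => ?_) (fun A hA _ => ?_)
    hsm₁.aestronglyMeasurable).symm
  · exact .of_bound (StronglyMeasurable.integral_prod_right'
      (f := fun p : Ω × X => Φ (p.1, H p.1 p.2))
      (hΦ0.comp (measurable_fst.prodMk hH)).stronglyMeasurable).aestronglyMeasurable C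
      (.of_forall fun _ => norm_integral_le_of_forall_norm_le fun _ => hΦC _)
  · exact (Integrable.of_bound (hsm₁.mono hm₁).aestronglyMeasurable C
      (.of_forall fun _ => norm_integral_le_of_forall_norm_le fun _ => hΦC _)).integrableOn
  · set ΦA := (A ×ˢ Set.univ).indicator Φ
    have hΦA : Measurable[@Prod.instMeasurableSpace Ω Y m₁ _] ΦA :=
      hΦ.indicator (hA.prod MeasurableSet.univ)
    have hΦAC : ∀ p, ‖ΦA p‖ ≤ C := fun p => (norm_indicator_le_norm_self _ _).trans (hΦC p)
    rw [← integral_indicator (hm₁ A hA), ← integral_indicator (hm₁ A hA)]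
    convert (integral_integral_comp_eq_integral_integral_map_of_indep (ν := ν) hm₁ hind hΦA hΦAC
      hH hH₂).symm using 2
    all_goals ext ω; by_cases hω : ω ∈ A <;> simp [ΦA, ν', hω]

end RandomMap

lemma measurable_uncurry_of_forall_continuous {Ω X Y : Type*} {m : MeasurableSpace Ω}
    [TopologicalSpace X] [MeasurableSpace X] [SecondCountableTopology X]
    [TopologicalSpace.MetrizableSpace X] [OpensMeasurableSpace X] [TopologicalSpace Y]
    [TopologicalSpace.PseudoMetrizableSpace Y] [MeasurableSpace Y] [BorelSpace Y] {F : Ω → X → Y} (hc : ∀ ω, Continuous (F ω))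
    (hm : ∀ x, Measurable fun ω => F ω x) : Measurable (Function.uncurry F) :=
  (measurable_uncurry_of_continuous_of_measurable (u := fun x ω => F ω x) hc hm).comp
    measurable_swap

section FlowSigmaAlgebras

variable {Ω X : Type*} [MeasurableSpace X] {S : ℝ → ℝ → Ω → X → X} {b s t : ℝ}

lemma measurable_sigmaGe_flow_apply (hbs : b ≤ s) (hst : s ≤ t) (x : X) :
    Measurable[sigmaGe S b] fun ω => S t s ω x :=
  fun _ hB => MeasurableSpace.measurableSet_generateFrom ⟨s, t, x, _, hbs, hst, hB, rfl⟩

lemma measurable_sigmaLe_flow_apply (hst : s ≤ t) (htb : t ≤ b) (x : X) :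
    Measurable[sigmaLe S b] fun ω => S t s ω x :=
  fun _ hB => MeasurableSpace.measurableSet_generateFrom ⟨s, t, x, _, hst, htb, hB, rfl⟩

end FlowSigmaAlgebras

section StochasticFlow

variable {Ω X : Type*} [MeasurableSpace Ω] [MetricSpace X] [MeasurableSpace X] [BorelSpace X]
  {ℙ : Measure Ω} {S : ℝ → ℝ → Ω → X → X}

lemma IsStochasticFlow.measurable_apply (hS : IsStochasticFlow ℙ S) {s t : ℝ} (hst : s ≤ t)
    (x : X) : Measurable fun ω => S t s ω x :=
  (hS.2 t x).comp ((measurable_const (a := (⟨s, hst⟩ : {r : ℝ // r ≤ t}))).prodMk measurable_id)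

lemma IsStochasticFlow.Fge_le [ℙ.IsComplete] (hS : IsStochasticFlow ℙ S) (b : ℝ) :
    Fge ℙ S b ≤ ‹MeasurableSpace Ω› := by
  refine completionOf_le (MeasurableSpace.generateFrom_le ?_)
  rintro _ ⟨s, t, x, B, -, hst, hB, rfl⟩
  exact hS.measurable_apply hst x hB

end StochasticFlow

/-- A modification of the flow `S` on a null set of sample points. Continuity for every (not
just almost every) `ω` is what makes `(ω, x) ↦ S' t s ω x` measurable for the completed
σ-algebras `Fge ℙ S s`. -/
structure IsRegularVersion {Ω X : Type*} [MeasurableSpace Ω] [TopologicalSpace X]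
    [MeasurableSpace X] (ℙ : Measure Ω) (S S' : ℝ → ℝ → Ω → X → X) : Prop where
  ae_eq : ∀ᵐ ω ∂ℙ, ∀ t s, S' t s ω = S t s ω
  comp : ∀ ω s r t, s ≤ r → r ≤ t → ∀ x, S' t r ω (S' r s ω x) = S' t s ω x
  continuous : ∀ ω s t, s ≤ t → Continuous (S' t s ω)
  measurable : ∀ s t, s ≤ t → ∀ x, Measurable fun ω => S' t s ω x
  measurable_Fge : ∀ s t, s ≤ t → ∀ x, Measurable[Fge ℙ S s] fun ω => S' t s ω x
  measurable_Fle : ∀ s t, s ≤ t → ∀ x, Measurable[Fle ℙ S t] fun ω => S' t s ω x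

section RegularVersion

open Function

variable {Ω X : Type*} [MeasurableSpace Ω] [MetricSpace X] [MeasurableSpace X] [BorelSpace X]
  {ℙ : Measure Ω} {S S' : ℝ → ℝ → Ω → X → X}

lemma IsStochasticFlow.exists_isRegularVersion (hS : IsStochasticFlow ℙ S) :
    ∃ S', IsRegularVersion ℙ S S' := by
  classical
  obtain ⟨G, hGae, hG, hSG⟩ := hS.1.exists_measurable_mem
  let S' : ℝ → ℝ → Ω → X → X := fun t s ω x => if ω ∈ G then S t s ω x else x
  have hae : ∀ᵐ ω ∂ℙ, ∀ t s, S' t s ω = S t s ω := by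
    filter_upwards [hGae] with ω hω t s
    simp [S', hω]
  have hae_apply (t s : ℝ) (x : X) : (fun ω => S t s ω x) =ᵐ[ℙ] fun ω => S' t s ω x := by
    filter_upwards [hae] with ω hω
    rw [hω]
  refine ⟨S', ⟨hae, fun ω s r t hsr hrt x => ?_, fun ω s t hst => ?_, fun s t hst x => ?_,
    fun s t hst x => ?_, fun s t hst x => ?_⟩⟩
  · by_cases hω : ω ∈ G
    · simp [S', hω, (hSG ω hω).1 s r t hsr hrt x]
    · simp [S', hω]
  · by_cases hω : ω ∈ G
    · simpa [S', hω] using (hSG ω hω).2.1 s t hst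
    · simpa [S', hω] using continuous_id'
  · exact Measurable.ite hG (hS.measurable_apply hst x) measurable_const
  · exact ((measurable_sigmaGe_flow_apply le_rfl hst x).mono le_completionOf le_rfl
      |>.completionOf_congr (hae_apply t s x))
  · exact ((measurable_sigmaLe_flow_apply hst le_rfl x).mono le_completionOf le_rfl
      |>.completionOf_congr (hae_apply t s x))

variable [SecondCountableTopology X] (hV : IsRegularVersion ℙ S S')
include hV

lemma IsRegularVersion.measurable_uncurry {s t : ℝ} (hst : s ≤ t) :
    Measurable (uncurry (S' t s)) :=
  measurable_uncurry_of_forall_continuous (hV.continuous · s t hst) (hV.measurable s t hst)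

lemma IsRegularVersion.measurable_Fge_integral {s t : ℝ} (hst : s ≤ t) {ν : Measure X}
    [SFinite ν] {f : X → ℝ} (hf : Measurable f) : Measurable[Fge ℙ S s] fun ω => ∫ x, f (S t s ω x) ∂ν := by
  have hjoint := measurable_uncurry_of_forall_continuous (m := Fge ℙ S s)
    (hV.continuous · s t hst) (hV.measurable_Fge s t hst)
  refine (@StronglyMeasurable.integral_prod_right' Ω X ℝ (Fge ℙ S s) _ ν _ _ _ _
    (hf.comp hjoint).stronglyMeasurable).measurable.completionOf_congr ?_
  filter_upwards [hV.ae_eq] with ω hω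
  simp [hω]

lemma IsRegularVersion.map_prod_eq {ρ : ℝ → Measure X} (hρ : IsMarkovEvolutionSystem ℙ S ρ)
    [SFinite ℙ] {a b : ℝ} (hab : a ≤ b) : (ℙ.prod (ρ a)).map (uncurry (S' b a)) = ρ b := by
  have := hρ.1 a
  have hH := hV.measurable_uncurry hab
  ext B hB
  rw [Measure.map_apply hH hB, Measure.prod_apply_symm (hH hB), ← hρ.2 a b hab B hB]
  refine lintegral_congr fun x => measure_congr ?_
  filter_upwards [hV.ae_eq] with ω hω
  change (S' b a ω x ∈ B) = (S b a ω x ∈ B)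
  rw [hω]

lemma IsRegularVersion.condExp_integral_ae_eq [IsProbabilityMeasure ℙ] {ρ : ℝ → Measure X}
    (hρ : IsMarkovEvolutionSystem ℙ S ρ) {a b t : ℝ} (hab : a ≤ b) (hbt : b ≤ t)
    (hle : Fge ℙ S b ≤ ‹MeasurableSpace Ω›)
    (hind : ProbabilityTheory.Indep (Fge ℙ S b) (Fle ℙ S b) ℙ)
    {f : X → ℝ} (hf : Measurable f) {C : ℝ} (hfC : ∀ x, |f x| ≤ C) :
    ℙ[fun ω => ∫ x, f (S t a ω x) ∂(ρ a) | Fge ℙ S b]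
      =ᵐ[ℙ] fun ω => ∫ y, f (S t b ω y) ∂(ρ b) := by
  have := hρ.1
  have hΦ : Measurable[@Prod.instMeasurableSpace Ω X (Fge ℙ S b) _]
      fun p : Ω × X => f (S' t b p.1 p.2) :=
    hf.comp (measurable_uncurry_of_forall_continuous (m := Fge ℙ S b)
      (hV.continuous · b t hbt) (hV.measurable_Fge b t hbt))
  have hsplit : (fun ω => ∫ x, f (S t a ω x) ∂(ρ a))
      =ᵐ[ℙ] fun ω => ∫ x, f (S' t b ω (S' b a ω x)) ∂(ρ a) := by
    filter_upwards [hV.ae_eq] with ω hω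
    simp_rw [hV.comp ω a b t hab hbt, hω]
  calc ℙ[fun ω => ∫ x, f (S t a ω x) ∂(ρ a) | Fge ℙ S b]
      =ᵐ[ℙ] ℙ[fun ω => ∫ x, f (S' t b ω (S' b a ω x)) ∂(ρ a) | Fge ℙ S b] :=
        condExp_congr_ae hsplit
    _ =ᵐ[ℙ] fun ω => ∫ y, f (S' t b ω y) ∂((ℙ.prod (ρ a)).map (uncurry (S' b a))) :=
        condExp_integral_comp_ae_eq_of_indep hle hind hΦ
          (fun _ => (Real.norm_eq_abs _).trans_le (hfC _)) (hV.measurable_uncurry hab)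
          (hV.measurable_Fle a b hab)
    _ =ᵐ[ℙ] fun ω => ∫ y, f (S t b ω y) ∂(ρ b) := by
        rw [hV.map_prod_eq hρ hab]
        filter_upwards [hV.ae_eq] with ω hω
        simp only [hω]

end RegularVersion

theorem stmt8_general {Ω X : Type*} [MeasurableSpace Ω] [MetricSpace X]
    [TopologicalSpace.SeparableSpace X] [MeasurableSpace X] [BorelSpace X]
    (ℙ : Measure Ω) [IsProbabilityMeasure ℙ] [ℙ.IsComplete]
    (S : ℝ → ℝ → Ω → X → X) (hS : IsWhiteNoiseFlow ℙ S)
    (ρ : ℝ → Measure X) (hρ : IsMarkovEvolutionSystem ℙ S ρ)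
    (t : ℝ) (f : X → ℝ) (hfm : Measurable f) (C : ℝ) (hfb : ∀ x : X, |f x| ≤ C)
    (M : ℝ → Ω → ℝ) (hM : ∀ s : ℝ, ∀ ω : Ω, M s ω = ∫ x, f (S t (t - s) ω x) ∂(ρ (t - s))) :
    (∀ s : ℝ, 0 ≤ s → ∀ ω : Ω, |M s ω| ≤ C) ∧
    (∀ s : ℝ, 0 ≤ s → Measurable[Fge ℙ S (t - s)] (M s)) ∧
    (∀ s u : ℝ, 0 ≤ s → s ≤ u → ℙ[M u | Fge ℙ S (t - s)] =ᵐ[ℙ] M s) := by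
  obtain ⟨hflow, hind⟩ := hS
  have := hρ.1
  have : SecondCountableTopology X := UniformSpace.secondCountable_of_separable X
  obtain ⟨S', hS'⟩ := hflow.exists_isRegularVersion
  have hM' (s : ℝ) : M s = fun ω => ∫ x, f (S t (t - s) ω x) ∂(ρ (t - s)) := funext (hM s)
  refine ⟨fun s _ ω => ?_, fun s hs => ?_, fun s u hs hsu => ?_⟩
  · simpa only [hM, Real.norm_eq_abs] using norm_integral_le_of_forall_norm_le (μ := ρ (t - s))
      fun x => (Real.norm_eq_abs _).trans_le (hfb _)
  · rw [hM']
    exact hS'.measurable_Fge_integral (by linarith) hfm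
  · rw [hM', hM']
    exact hS'.condExp_integral_ae_eq hρ (by linarith) (by linarith) (hflow.Fge_le _) (hind _) hfm hfb

/-- for a white noise stochastic flow `S` on a complete probability space,
with an evolution system of measures `ρ` for the Markov semigroup, a fixed time `t` and a
bounded measurable `f : X → ℝ`, the process `M_s(ω) := ∫ f(S(t,t-s;ω)x) ρ_{t-s}(dx)`,
`s ≥ 0`, is a bounded martingale with respect to the filtration `𝓖_s := 𝓕_{≥ t-s}`. -/
theorem stmt8 {Ω X : Type*} [MeasurableSpace Ω] [MetricSpace X] [CompleteSpace X]
    [TopologicalSpace.SeparableSpace X] [MeasurableSpace X] [BorelSpace X]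
    (ℙ : Measure Ω) [IsProbabilityMeasure ℙ] [ℙ.IsComplete]
    (S : ℝ → ℝ → Ω → X → X) (hS : IsWhiteNoiseFlow ℙ S)
    (ρ : ℝ → Measure X) (hρ : IsMarkovEvolutionSystem ℙ S ρ)
    (t : ℝ) (f : X → ℝ) (hfm : Measurable f) (C : ℝ) (hfb : ∀ x : X, |f x| ≤ C)
    (M : ℝ → Ω → ℝ) (hM : ∀ s : ℝ, ∀ ω : Ω, M s ω = ∫ x, f (S t (t - s) ω x) ∂(ρ (t - s))) :
    (∀ s : ℝ, 0 ≤ s → ∀ ω : Ω, |M s ω| ≤ C) ∧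
    (∀ s : ℝ, 0 ≤ s → Measurable[Fge ℙ S (t - s)] (M s)) ∧
    (∀ s u : ℝ, 0 ≤ s → s ≤ u → ℙ[M u | Fge ℙ S (t - s)] =ᵐ[ℙ] M s) :=
  stmt8_general ℙ S hS ρ hρ t f hfm C hfb M hM
end
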